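/- arXiv:2112.06726 — 9 statements merged into one kernel-verified Lean document; each statement's English description precedes it below -/
import Mathlib

section
/- Let p ≥ 5 be an odd integer, m ≥ 3, and let i_1,…,i_m ∈ C_p be colors, not all equal to 0. Then a chain coloring for (i_1,…,i_m) exists if and only if for every integer k with 0 ≤ 2k+1 ≤ m and every subset {s_1,…,s_{2k+1}} ⊆ {1,…,m} of cardinality 2k+1 one has 2·(i_{s_1}+⋯+i_{s_{2k+1}}) ≤ 2k(p−2) + (i_1+⋯+i_m). -/
/-- Level-`p` colors for odd `p`: even natural numbers `j` with `j ≤ p - 3`. -/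
def ColorOdd (p j : ℕ) : Prop := Even j ∧ j + 3 ≤ p

/-- `p`-admissibility of a triple of colors for odd `p`:
`|b - c| ≤ a ≤ b + c` and `a + b + c ≤ 2p - 4`. -/
def AdmOdd (p a b c : ℕ) : Prop :=
  b ≤ a + c ∧ c ≤ a + b ∧ a ≤ b + c ∧ a + b + c + 4 ≤ 2 * p

/-- `ChainFrom adm C a l e` : starting from the color `a`, the boundary colors `l`
can be connected by the chain of internal colors `e` (each internal color satisfying `C`),
all consecutive triples being admissible. -/
def ChainFrom (adm : ℕ → ℕ → ℕ → Prop) (C : ℕ → Prop) : ℕ → List ℕ → List ℕ → Prop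
  | a, [x, y], [] => adm a x y
  | a, x :: rest, e :: es => C e ∧ adm a x e ∧ ChainFrom adm C e rest es
  | _, _, _ => False

/-- `IsChainColoring adm C i e` : `e = (e_1, …, e_{m-3})` is a chain coloring for the boundary
tuple `i = (i_1, …, i_m)`, i.e. the triples `(i_1,i_2,e_1), (e_1,i_3,e_2), …,
(e_{m-3}, i_{m-1}, i_m)` are all admissible and each `e_t` is a color. -/
def IsChainColoring (adm : ℕ → ℕ → ℕ → Prop) (C : ℕ → Prop) : List ℕ → List ℕ → Prop
  | i1 :: rest, e => ChainFrom adm C i1 rest e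
  | [], _ => False

/-- A chain coloring for the boundary tuple `i` exists. -/
def HasChain (adm : ℕ → ℕ → ℕ → Prop) (C : ℕ → Prop) (i : List ℕ) : Prop :=
  ∃ e, IsChainColoring adm C i e

/-!
Call a list `l` of colors balanced (`OddSublistBound p l`) if every odd-length sublist `s` satisfies
`2 Σs ≤ (|s| - 1)(p - 2) + Σl`; for `l = (i_1, …, i_m)` and `|s| = 2k + 1` this is the condition of
the theorem, and for three colors it is exactly admissibility. A chain coloring of `(a, b, c, …)`
is a color `e` with `(a, b, e)` admissible together with a chain coloring of `(e, c, …)`, so by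
induction on the length it suffices to show that `(a, b, c, …)` is balanced iff some such `e`
makes `(e, c, …)` balanced.

If `(a, b, e)` is admissible, balance passes from `(e, c, …)` to `(a, b, c, …)` by the triangle
inequalities. Conversely, the requirements on `e` split into the even lower bounds `|a - b|` and
`2Σs - (|s| - 1)(p - 2) - Σl` (for odd sublists `s` of `l = (c, …)`) and a family of upper bounds.
Balance of `(a, b, c, …)` puts every lower bound below every upper bound, so the largest lower bound
is a valid `e`. The only comparison that is not immediate, between an odd sublist `s` and an even
sublist `t` of `l`, follows from `Σs + Σt ≤ Σ(s ∪ t) + |s ∩ t| (p - 3)` and `2 |s ∩ t| < |s| + |t|`.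
-/

theorem Multiset.sum_add_sum_le_sum_add_min_card_mul {s t M : Multiset ℕ} {c : ℕ}
    (hs : s ≤ M) (ht : t ≤ M) (hc : ∀ x ∈ M, x ≤ c) :
    s.sum + t.sum ≤ M.sum + min (card s) (card t) * c := by
  classical
  obtain ⟨u, hu⟩ := Multiset.le_iff_exists_add.mp (Multiset.union_le hs ht)
  have hinter : (s ∩ t).sum ≤ card (s ∩ t) * c := by
    simpa using Multiset.sum_le_card_nsmul (s ∩ t) c fun x hx =>
      hc x (Multiset.subset_of_le (Multiset.inter_le_left.trans hs) hx)
  have hcard : card (s ∩ t) ≤ min (card s) (card t) :=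
    le_min (card_le_card Multiset.inter_le_left) (card_le_card Multiset.inter_le_right)
  calc s.sum + t.sum = (s ∪ t).sum + (s ∩ t).sum := by
        rw [← Multiset.sum_add, ← Multiset.sum_add, Multiset.union_add_inter]
    _ ≤ M.sum + min (card s) (card t) * c := by
        rw [hu, Multiset.sum_add]
        gcongr
        · exact le_self_add
        · exact hinter.trans (Nat.mul_le_mul_right c hcard)

theorem List.Sublist.sum_add_sum_le {s t l : List ℕ} {c : ℕ}
    (hs : s.Sublist l) (ht : t.Sublist l) (hc : ∀ x ∈ l, x ≤ c) :
    s.sum + t.sum ≤ l.sum + min s.length t.length * c := by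
  simpa using Multiset.sum_add_sum_le_sum_add_min_card_mul
    (Multiset.coe_le.mpr hs.subperm) (Multiset.coe_le.mpr ht.subperm) hc

theorem List.forall_sublist_cons {α : Type*} {P : List α → Prop} {x : α} {l : List α} :
    (∀ s, s.Sublist (x :: l) → P s) ↔
      (∀ s, s.Sublist l → P s) ∧ ∀ s, s.Sublist l → P (x :: s) := by
  simp only [List.sublist_cons_iff]
  constructor
  · intro h
    exact ⟨fun s hs => h s (.inl hs), fun s hs => h _ (.inr ⟨s, rfl, hs⟩)⟩
  · rintro ⟨h, h'⟩ s (hs | ⟨s, rfl, hs⟩)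
    exacts [h s hs, h' s hs]

theorem List.Sublist.two_mul_sum_le {s l : List ℕ} {c : ℕ} (hs : s.Sublist l) (hne : s ≠ [])
    (hc : ∀ y ∈ l, y ≤ c) :
    2 * (s.sum : ℤ) ≤ ((s.length : ℤ) - 1) * (c + 1) + c + l.sum := by
  have hsl : (s.sum : ℤ) ≤ l.sum := by exact_mod_cast hs.sum_le_sum fun _ _ => Nat.zero_le _
  have hsc : (s.sum : ℤ) ≤ s.length * c := by
    exact_mod_cast (by simpa using List.sum_le_card_nsmul s c fun y hy => hc y (hs.subset hy))
  have hpos : (1 : ℤ) ≤ s.length := by exact_mod_cast List.length_pos_iff.mpr hne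
  nlinarith

theorem List.Sublist.two_mul_sum_add_sum_le {s t l : List ℕ} {c : ℕ} (hs : s.Sublist l)
    (ht : t.Sublist l) (hst : s.length ≠ t.length) (hc : ∀ y ∈ l, y ≤ c) :
    2 * ((s.sum : ℤ) + t.sum) ≤ ((s.length : ℤ) + t.length - 1) * (c + 1) + 2 * l.sum := by
  have hsum : (s.sum : ℤ) + t.sum ≤ l.sum + (min s.length t.length : ℕ) * c := by
    exact_mod_cast hs.sum_add_sum_le ht hc
  have hmin : 2 * ((min s.length t.length : ℕ) : ℤ) ≤ s.length + t.length - 1 := by omega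
  nlinarith [mul_le_mul_of_nonneg_right hmin (Nat.cast_nonneg (α := ℤ) c)]

theorem List.forall_sublist_ofFn_iff {M : Type*} [AddCommMonoid M] {m : ℕ} (f : Fin m → M)
    (P : ℕ → M → Prop) :
    (∀ s : List M, s.Sublist (List.ofFn f) → P s.length s.sum) ↔
      ∀ S : Finset (Fin m), P S.card (∑ i ∈ S, f i) := by
  classical
  have key : ∀ l : List (Fin m), l.Nodup →
      (l.map f).length = l.toFinset.card ∧ (l.map f).sum = ∑ i ∈ l.toFinset, f i :=
    fun l hl => ⟨by simp [List.toFinset_card_of_nodup hl], (List.sum_toFinset f hl).symm⟩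
  rw [List.ofFn_eq_map]
  constructor
  · intro h S
    let l := (List.finRange m).filter (· ∈ S)
    have hl : l.Nodup := (List.nodup_finRange m).filter _
    have hS : l.toFinset = S := by ext; simp [l]
    have := h (l.map f) (List.filter_sublist.map f)
    rwa [(key l hl).1, (key l hl).2, hS] at this
  · intro h s hs
    obtain ⟨l, hl, rfl⟩ := List.sublist_map_iff.mp hs
    obtain ⟨hlen, hsum⟩ := key l ((List.nodup_finRange m).sublist hl)
    rw [hlen, hsum]
    exact h _

section Chains

variable {adm : ℕ → ℕ → ℕ → Prop} {C : ℕ → Prop}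

theorem hasChain_three_iff {a b c : ℕ} : HasChain adm C [a, b, c] ↔ adm a b c := by
  refine ⟨fun ⟨e, he⟩ => ?_, fun h => ⟨[], h⟩⟩
  rcases e with _ | ⟨e, _ | ⟨e', es⟩⟩ <;> simp_all [IsChainColoring, ChainFrom]

theorem hasChain_cons_iff {a b c d : ℕ} {l : List ℕ} :
    HasChain adm C (a :: b :: c :: d :: l) ↔
      ∃ e, C e ∧ adm a b e ∧ HasChain adm C (e :: c :: d :: l) := by
  constructor
  · rintro ⟨_ | ⟨e, es⟩, he⟩
    · simp [IsChainColoring, ChainFrom] at he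
    · exact ⟨e, he.1, he.2.1, es, he.2.2⟩
  · rintro ⟨e, he, hadm, es, hes⟩
    exact ⟨e :: es, he, hadm, hes⟩

end Chains

def OddSublistBound (p : ℕ) (l : List ℕ) : Prop :=
  ∀ s : List ℕ, s.Sublist l → Odd s.length →
    2 * (s.sum : ℤ) ≤ ((s.length : ℤ) - 1) * ((p : ℤ) - 2) + l.sum

theorem oddSublistBound_cons_iff {p x : ℕ} {l : List ℕ} :
    OddSublistBound p (x :: l) ↔
      (∀ s : List ℕ, s.Sublist l → Odd s.length →
        2 * (s.sum : ℤ) ≤ ((s.length : ℤ) - 1) * ((p : ℤ) - 2) + x + l.sum) ∧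
      (∀ s : List ℕ, s.Sublist l → Even s.length →
        x + 2 * (s.sum : ℤ) ≤ (s.length : ℤ) * ((p : ℤ) - 2) + l.sum) := by
  simp only [OddSublistBound, List.forall_sublist_cons, List.sum_cons, List.length_cons,
    Nat.odd_add_one, Nat.not_odd_iff_even, Nat.cast_add, Nat.cast_one]
  refine and_congr (forall₂_congr fun s _ => imp_congr_right fun _ => ?_)
    (forall₂_congr fun s _ => imp_congr_right fun _ => ?_) <;>
  constructor <;> intro h <;> linarith

theorem oddSublistBound_cons_cons_iff {p a b : ℕ} {l : List ℕ} :
    OddSublistBound p (a :: b :: l) ↔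
      (∀ s : List ℕ, s.Sublist l → Odd s.length →
        2 * (s.sum : ℤ) ≤ ((s.length : ℤ) - 1) * ((p : ℤ) - 2) + a + b + l.sum) ∧
      (∀ s : List ℕ, s.Sublist l → Even s.length →
        b + 2 * (s.sum : ℤ) ≤ (s.length : ℤ) * ((p : ℤ) - 2) + a + l.sum) ∧
      (∀ s : List ℕ, s.Sublist l → Even s.length →
        a + 2 * (s.sum : ℤ) ≤ (s.length : ℤ) * ((p : ℤ) - 2) + b + l.sum) ∧
      (∀ s : List ℕ, s.Sublist l → Odd s.length →
        a + b + 2 * (s.sum : ℤ) ≤ ((s.length : ℤ) + 1) * ((p : ℤ) - 2) + l.sum) := by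
  rw [oddSublistBound_cons_iff]
  simp only [List.forall_sublist_cons, List.sum_cons, List.length_cons, Nat.odd_add_one,
    Nat.even_add_one, Nat.not_odd_iff_even, Nat.not_even_iff_odd, Nat.cast_add, Nat.cast_one,
    and_assoc]
  refine and_congr ?_ (and_congr ?_ (and_congr ?_ ?_)) <;>
  refine forall₂_congr fun s _ => imp_congr_right fun _ => ⟨fun h => ?_, fun h => ?_⟩ <;>
  linarith

theorem oddSublistBound_triple_iff {p a b c : ℕ} :
    OddSublistBound p [a, b, c] ↔ AdmOdd p a b c := by
  rw [oddSublistBound_cons_cons_iff]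
  simp only [List.sublist_singleton, forall_eq_or_imp, forall_eq, IsEmpty.forall_iff,
    forall_const, List.length_nil, List.length_cons, List.sum_nil, List.sum_cons, List.map_nil,
    List.map_cons, Nat.cast_list_sum, Nat.cast_one, Nat.not_odd_zero, odd_one, Even.zero,
    Nat.not_even_one, CharP.cast_eq_zero, add_zero, zero_add, mul_zero, zero_mul, one_mul, neg_mul,
    zero_sub, sub_self, neg_sub, Int.reduceNeg, Int.reduceAdd, true_and, and_true, AdmOdd]
  omega

theorem OddSublistBound.cons_cons_of_admOdd {p a b e : ℕ} {l : List ℕ}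
    (hadm : AdmOdd p a b e) (h : OddSublistBound p (e :: l)) :
    OddSublistBound p (a :: b :: l) := by
  obtain ⟨hb, he, ha, habe⟩ := hadm
  zify at hb he ha habe
  obtain ⟨hodd, heven⟩ := oddSublistBound_cons_iff.mp h
  refine oddSublistBound_cons_cons_iff.mpr ⟨fun s hs hs' => ?_, fun s hs hs' => ?_,
    fun s hs hs' => ?_, fun s hs hs' => ?_⟩
  · linarith [hodd s hs hs']
  · linarith [heven s hs hs']
  · linarith [heven s hs hs']
  · linarith [hodd s hs hs']

/-- The upper bounds on `e` contained in `AdmOdd p a b e`, `ColorOdd p e` and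
`OddSublistBound p (e :: l)`. -/
def BelowUpperBounds (p a b : ℕ) (l : List ℕ) (x : ℤ) : Prop :=
  x ≤ a + b ∧ x + a + b + 4 ≤ 2 * p ∧ x + 3 ≤ p ∧
    ∀ t : List ℕ, t.Sublist l → Even t.length →
      x + 2 * (t.sum : ℤ) ≤ (t.length : ℤ) * ((p : ℤ) - 2) + l.sum

theorem OddSublistBound.belowUpperBounds_abs_sub {p a b : ℕ} {l : List ℕ} (ha : a + 3 ≤ p)
    (hb : b + 3 ≤ p) (h : OddSublistBound p (a :: b :: l)) :
    BelowUpperBounds p a b l |(a : ℤ) - b| := by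
  obtain ⟨-, hb_le, ha_le, -⟩ := oddSublistBound_cons_cons_iff.mp h
  zify at ha hb
  rcases abs_cases ((a : ℤ) - b) with ⟨habs, -⟩ | ⟨habs, -⟩ <;> rw [habs] <;>
    exact ⟨by linarith, by linarith, by linarith,
      fun t ht ht' => by linarith [hb_le t ht ht', ha_le t ht ht']⟩

theorem OddSublistBound.belowUpperBounds_of_odd {p a b : ℕ} {l s : List ℕ}
    (hl : ∀ y ∈ l, y + 3 ≤ p) (h : OddSublistBound p (a :: b :: l)) (hs : s.Sublist l)
    (hs' : Odd s.length) :
    BelowUpperBounds p a b l (2 * s.sum - ((s.length : ℤ) - 1) * ((p : ℤ) - 2) - l.sum) := by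
  obtain ⟨hab, -, -, habl⟩ := oddSublistBound_cons_cons_iff.mp h
  have hlc : ∀ y ∈ l, y ≤ p - 3 := fun y hy => Nat.le_sub_of_add_le (hl y hy)
  have hcast : ((p - 3 : ℕ) : ℤ) + 1 = p - 2 := by
    have := hl _ (hs.subset (List.getElem_mem hs'.pos)); omega
  refine ⟨by linarith [hab s hs hs'], by linarith [habl s hs hs'], ?_, fun t ht ht' => ?_⟩
  · have := hs.two_mul_sum_le (List.ne_nil_of_length_pos hs'.pos) hlc
    rw [hcast] at this
    linarith
  · have := hs.two_mul_sum_add_sum_le ht (fun h => Nat.not_even_iff_odd.mpr hs' (h ▸ ht')) hlc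
    rw [hcast] at this
    linarith

theorem exists_admOdd_of_bounds {p a b : ℕ} {l : List ℕ} {x : ℤ} (hx : Even x)
    (habs : |(a : ℤ) - b| ≤ x)
    (hlow : ∀ s : List ℕ, s.Sublist l → Odd s.length →
      2 * s.sum - ((s.length : ℤ) - 1) * ((p : ℤ) - 2) - l.sum ≤ x)
    (hup : BelowUpperBounds p a b l x) :
    ∃ e, ColorOdd p e ∧ AdmOdd p a b e ∧ OddSublistBound p (e :: l) := by
  obtain ⟨e, rfl⟩ := Int.eq_ofNat_of_zero_le ((abs_nonneg _).trans habs)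
  obtain ⟨h1, h2, h3, h4⟩ := hup
  obtain ⟨hab, hba⟩ := abs_sub_le_iff.mp habs
  exact ⟨e, ⟨(Int.even_coe_nat e).mp hx, by omega⟩, ⟨by omega, by omega, by omega, by omega⟩,
    oddSublistBound_cons_iff.mpr ⟨fun s hs hs' => by linarith [hlow s hs hs'], h4⟩⟩

theorem OddSublistBound.exists_admOdd {p a b : ℕ} {l : List ℕ}
    (hcol : ∀ y ∈ a :: b :: l, ColorOdd p y) (h : OddSublistBound p (a :: b :: l)) :
    ∃ e, ColorOdd p e ∧ AdmOdd p a b e ∧ OddSublistBound p (e :: l) := by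
  classical
  obtain ⟨⟨ha, ha'⟩, ⟨hb, hb'⟩, hl⟩ :
      ColorOdd p a ∧ ColorOdd p b ∧ ∀ y ∈ l, ColorOdd p y := by
    simpa only [List.forall_mem_cons] using hcol
  have hsum_even : Even (l.sum : ℤ) := (Int.even_coe_nat _).mpr <| even_iff_two_dvd.mpr <|
    List.dvd_sum fun y hy => even_iff_two_dvd.mp (hl y hy).1
  let lower (s : List ℕ) : ℤ := 2 * s.sum - ((s.length : ℤ) - 1) * ((p : ℤ) - 2) - l.sum
  -- the lower bounds on `e`; their maximum is the color we are looking for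
  let Λ : Finset ℤ := insert |(a : ℤ) - b|
    ((l.sublists.filter fun s => Odd s.length).map lower).toFinset
  have hΛ : Λ.Nonempty := Finset.insert_nonempty _ _
  have hmem : ∀ x ∈ Λ, Even x ∧ BelowUpperBounds p a b l x := by
    intro x hx
    rcases Finset.mem_insert.mp hx with rfl | hx
    · exact ⟨even_abs.mpr (((Int.even_coe_nat a).mpr ha).sub ((Int.even_coe_nat b).mpr hb)),
        h.belowUpperBounds_abs_sub ha' hb'⟩
    · obtain ⟨s, hs, rfl⟩ := List.mem_map.mp (List.mem_toFinset.mp hx)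
      obtain ⟨hs, hs'⟩ := List.mem_filter.mp hs
      replace hs := List.mem_sublists.mp hs
      replace hs' : Odd s.length := by simpa using hs'
      exact ⟨((even_two_mul _).sub ((hs'.natCast.sub_odd odd_one).mul_right _)).sub hsum_even,
        h.belowUpperBounds_of_odd (fun y hy => (hl y hy).2) hs hs'⟩
  obtain ⟨hev, hup⟩ := hmem _ (Λ.max'_mem hΛ)
  refine exists_admOdd_of_bounds hev (Λ.le_max' _ (Finset.mem_insert_self _ _))
    (fun s hs hs' => Λ.le_max' _ ?_) hup
  exact Finset.mem_insert_of_mem <| List.mem_toFinset.mpr <| List.mem_map_of_mem <|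
    List.mem_filter.mpr ⟨List.mem_sublists.mpr hs, by simpa using hs'⟩

theorem hasChain_iff_oddSublistBound {p a b c : ℕ} {l : List ℕ}
    (hcol : ∀ y ∈ a :: b :: c :: l, ColorOdd p y) :
    HasChain (AdmOdd p) (ColorOdd p) (a :: b :: c :: l) ↔
      OddSublistBound p (a :: b :: c :: l) := by
  induction l generalizing a b c with
  | nil => exact hasChain_three_iff.trans oddSublistBound_triple_iff.symm
  | cons d l ih =>
    have hcol' {e : ℕ} (he : ColorOdd p e) : ∀ y ∈ e :: c :: d :: l, ColorOdd p y :=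
      List.forall_mem_cons.mpr ⟨he, fun y hy => hcol y (.tail _ (.tail _ hy))⟩
    rw [hasChain_cons_iff]
    constructor
    · rintro ⟨e, he, hadm, hchain⟩
      exact ((ih (hcol' he)).mp hchain).cons_cons_of_admOdd hadm
    · intro h
      obtain ⟨e, he, hadm, h'⟩ := h.exists_admOdd hcol
      exact ⟨e, he, hadm, (ih (hcol' he)).mpr h'⟩

theorem oddSublistBound_ofFn_iff {p m : ℕ} (i : Fin m → ℕ) :
    OddSublistBound p (List.ofFn i) ↔
      ∀ (k : ℕ) (S : Finset (Fin m)), 2 * k + 1 ≤ m → S.card = 2 * k + 1 →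
        2 * ∑ s ∈ S, (i s : ℤ) ≤ 2 * (k : ℤ) * ((p : ℤ) - 2) + ∑ t, (i t : ℤ) := by
  refine (List.forall_sublist_ofFn_iff i fun n x =>
    Odd n → 2 * (x : ℤ) ≤ ((n : ℤ) - 1) * ((p : ℤ) - 2) + (List.ofFn i).sum).trans ?_
  simp only [List.sum_ofFn, Nat.cast_sum]
  constructor
  · rintro h k S - hS
    have := h S ⟨k, hS⟩
    rw [hS] at this
    push_cast at this
    linarith
  · rintro h S ⟨k, hS⟩
    have := h k S (hS ▸ (S.card_le_univ.trans_eq (Fintype.card_fin m))) hS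
    rw [hS]
    push_cast
    linarith

theorem stmt0_general (p : ℕ) (m : ℕ) (hm : 3 ≤ m)
    (i : Fin m → ℕ) (hi : ∀ s, ColorOdd p (i s)) :
    HasChain (AdmOdd p) (ColorOdd p) (List.ofFn i) ↔
      ∀ (k : ℕ) (S : Finset (Fin m)), 2 * k + 1 ≤ m → S.card = 2 * k + 1 →
        2 * ∑ s ∈ S, (i s : ℤ) ≤ 2 * (k : ℤ) * ((p : ℤ) - 2) + ∑ t, (i t : ℤ) := by
  have hcol : ∀ y ∈ List.ofFn i, ColorOdd p y := List.forall_mem_ofFn_iff.mpr hi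
  rw [← oddSublistBound_ofFn_iff]
  obtain ⟨n, rfl⟩ : ∃ n, m = n + 3 := ⟨m - 3, by omega⟩
  simp only [List.ofFn_succ] at hcol ⊢
  exact hasChain_iff_oddSublistBound hcol

/-- for odd `p ≥ 5`, `m ≥ 3` and colors `i_1, …, i_m ∈ C_p` not all zero,
a chain coloring for `(i_1, …, i_m)` exists iff for every `k` with `2k+1 ≤ m` and every
subset `S ⊆ {1, …, m}` of cardinality `2k+1` one has
`2 ∑_{s ∈ S} i_s ≤ 2k(p-2) + ∑_t i_t`. -/
theorem stmt0 (p : ℕ) (hp : 5 ≤ p) (hodd : Odd p) (m : ℕ) (hm : 3 ≤ m)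
    (i : Fin m → ℕ) (hi : ∀ s, ColorOdd p (i s)) (hne : ∃ s, i s ≠ 0) :
    HasChain (AdmOdd p) (ColorOdd p) (List.ofFn i) ↔
      ∀ (k : ℕ) (S : Finset (Fin m)), 2 * k + 1 ≤ m → S.card = 2 * k + 1 →
        2 * ∑ s ∈ S, (i s : ℤ) ≤ 2 * (k : ℤ) * ((p : ℤ) - 2) + ∑ t, (i t : ℤ) :=
  stmt0_general p m hm i hi
end

section
/- Let p ≥ 5 be an odd integer, n ≥ 2, and let i_1 ≤ i_2 ≤ ⋯ ≤ i_n be colors in C_p. Define δ_p(i_1,…,i_n) as the number of j ∈ C_p such that (i_1,…,i_n,j) has a chain coloring. Set J_max = min over integers ℓ with 0 ≤ ℓ ≤ n/2 of min(p−3, Σ_{t=1}^{n−2ℓ} i_t − Σ_{s=n−2ℓ+1}^{n} i_s + 2ℓ(p−2)), and J_min = max over integers k with 0 ≤ k and n−2k−1 ≥ 0 of max(0, Σ_{s=n−2k}^{n} i_s − Σ_{t=1}^{n−2k−1} i_t − 2k(p−2)). Then δ_p(i_1,…,i_n) = 1 + (J_max − J_min)/2; in particular δ_p(i_1,…,i_n)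 ≥ 1. -/
/-- `δ_p(i)`: the number of colors `j ∈ C_p` such that `(i_1, …, i_n, j)` has a
chain coloring. -/
noncomputable def deltaOdd (p : ℕ) (i : List ℕ) : ℕ :=
  {j : ℕ | ColorOdd p j ∧ HasChain (AdmOdd p) (ColorOdd p) (i ++ [j])}.ncard

/-- `J_{p,max}(i) = min_{0 ≤ ℓ ≤ n/2} min (p-3, ∑_{t=1}^{n-2ℓ} i_t - ∑_{s=n-2ℓ+1}^{n} i_s
+ 2ℓ(p-2))`, indices of `i` being `1`-based in the informal statement. -/
def JmaxOdd (p n : ℕ) (i : Fin n → ℕ) : ℤ :=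
  (Finset.range (n / 2 + 1)).inf' (Finset.nonempty_range_iff.mpr (Nat.succ_ne_zero _))
    fun l => min ((p : ℤ) - 3)
      ((∑ t ∈ Finset.univ.filter (fun t : Fin n => (t : ℕ) < n - 2 * l), (i t : ℤ))
        - (∑ s ∈ Finset.univ.filter (fun s : Fin n => n - 2 * l ≤ (s : ℕ)), (i s : ℤ))
        + 2 * (l : ℤ) * ((p : ℤ) - 2))

/-- `J_{p,min}(i) = max_{0 ≤ k, n-2k-1 ≥ 0} max (0, ∑_{s=n-2k}^{n} i_s
- ∑_{t=1}^{n-2k-1} i_t - 2k(p-2))`, indices of `i` being `1`-based. -/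
def JminOdd (p n : ℕ) (i : Fin n → ℕ) : ℤ :=
  (Finset.range ((n - 1) / 2 + 1)).sup' (Finset.nonempty_range_iff.mpr (Nat.succ_ne_zero _))
    fun k => max 0
      ((∑ s ∈ Finset.univ.filter (fun s : Fin n => n - (2 * k + 1) ≤ (s : ℕ)), (i s : ℤ))
        - (∑ t ∈ Finset.univ.filter (fun t : Fin n => (t : ℕ) < n - (2 * k + 1)), (i t : ℤ))
        - 2 * (k : ℤ) * ((p : ℤ) - 2))



namespace Stmt1Aux


variable {adm : ℕ → ℕ → ℕ → Prop} {C : ℕ → Prop}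

lemma cf_cons {a x : ℕ} {rest : List ℕ} {e : ℕ} {es : List ℕ} :
    ChainFrom adm C a (x :: rest) (e :: es) ↔ C e ∧ adm a x e ∧ ChainFrom adm C e rest es := by
  simp [ChainFrom]

lemma cf_single {a y : ℕ} {es : List ℕ} : ¬ ChainFrom adm C a [y] es := by
  induction es generalizing a <;> simp_all [ChainFrom]

lemma cf_long_nil {a x : ℕ} {rest : List ℕ} (h : rest.length ≠ 1) :
    ¬ ChainFrom adm C a (x :: rest) [] := by
  match rest, h with
  | [], _ => simp [ChainFrom]
  | (u :: v :: w), _ => simp [ChainFrom]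
  | [u], h => exact absurd rfl h

lemma chainFrom_pair {a x y : ℕ} : (∃ es, ChainFrom adm C a [x, y] es) ↔ adm a x y := by
  constructor
  · rintro ⟨es, h⟩
    cases es with
    | nil => simpa [ChainFrom] using h
    | cons e es' => exact absurd (cf_cons.mp h).2.2 cf_single
  · intro h; exact ⟨[], by simpa [ChainFrom] using h⟩

lemma exists_cf_cons {a x : ℕ} {rest : List ℕ} (h : rest.length ≠ 1) :
    (∃ es, ChainFrom adm C a (x :: rest) es) ↔
      ∃ e, C e ∧ adm a x e ∧ ∃ es, ChainFrom adm C e rest es := by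
  constructor
  · rintro ⟨es, hes⟩
    cases es with
    | nil => exact absurd hes (cf_long_nil h)
    | cons e es' =>
      rw [cf_cons] at hes
      exact ⟨e, hes.1, hes.2.1, es', hes.2.2⟩
  · rintro ⟨e, h1, h2, es, h3⟩
    exact ⟨e :: es, cf_cons.mpr ⟨h1, h2, h3⟩⟩

lemma chain_append : ∀ (l : List ℕ), l ≠ [] → ∀ (a c j : ℕ),
    ((∃ es, ChainFrom adm C a (l ++ [c, j]) es) ↔
      ∃ e, C e ∧ (∃ es, ChainFrom adm C a (l ++ [e]) es) ∧ adm e c j) := by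
  intro l
  induction l with
  | nil => intro h; exact absurd rfl h
  | cons x l' ih =>
    intro _ a c j
    cases l' with
    | nil =>
      simp only [List.cons_append, List.nil_append]
      rw [exists_cf_cons (by simp)]
      constructor
      · rintro ⟨e, h1, h2, h3⟩
        exact ⟨e, h1, chainFrom_pair.mpr h2, chainFrom_pair.mp h3⟩
      · rintro ⟨e, h1, h2, h3⟩
        exact ⟨e, h1, chainFrom_pair.mp h2, chainFrom_pair.mpr h3⟩
    | cons z l'' =>
      simp only [List.cons_append]
      simp only [List.cons_append] at ih
      rw [exists_cf_cons (by simp)]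
      constructor
      · rintro ⟨e, h1, h2, h3⟩
        rw [ih (by simp)] at h3
        obtain ⟨f, hf1, hf2, hf3⟩ := h3
        refine ⟨f, hf1, ?_, hf3⟩
        rw [exists_cf_cons (by simp)]
        exact ⟨e, h1, h2, hf2⟩
      · rintro ⟨f, hf1, hf2, hf3⟩
        rw [exists_cf_cons (by simp)] at hf2
        obtain ⟨e, h1, h2, h3⟩ := hf2
        refine ⟨e, h1, h2, ?_⟩
        rw [ih (by simp)]
        exact ⟨f, hf1, h3, hf3⟩

lemma hasChain_cons {a : ℕ} {L : List ℕ} :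
    HasChain adm C (a :: L) ↔ ∃ es, ChainFrom adm C a L es := by
  simp [HasChain, IsChainColoring]



lemma even_max {a b : ℤ} (ha : Even a) (hb : Even b) : Even (max a b) := by
  rcases max_choice a b with h | h <;> simp [h, ha, hb]

lemma even_min {a b : ℤ} (ha : Even a) (hb : Even b) : Even (min a b) := by
  rcases min_choice a b with h | h <;> simp [h, ha, hb]

def stepL (p : ℕ) (A : ℤ × ℤ) (c : ℕ) : ℤ × ℤ :=
  (max 0 (max (A.1 - (c : ℤ)) ((c : ℤ) - A.2)),
    min ((p : ℤ) - 3) (min (A.2 + (c : ℤ)) (2 * (p : ℤ) - 4 - A.1 - (c : ℤ))))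

structure Good (p : ℕ) (A B : ℤ) : Prop where
  h0 : 0 ≤ A
  hAB : A ≤ B
  hB : B ≤ (p : ℤ) - 3
  hA2 : Even A
  hB2 : Even B

lemma even_int_of_colorOdd {p c : ℕ} (hc : ColorOdd p c) : Even (c : ℤ) := by
  obtain ⟨k, hk⟩ := hc.1; exact ⟨k, by omega⟩

lemma even_p3 {p : ℕ} (hodd : Odd p) : Even ((p : ℤ) - 3) := by
  obtain ⟨k, hk⟩ := hodd; exact ⟨(k : ℤ) - 1, by omega⟩

lemma good_step {p : ℕ} (hp : 5 ≤ p) (hodd : Odd p) {A B : ℤ} (hG : Good p A B)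
    {c : ℕ} (hc : ColorOdd p c) :
    Good p (stepL p (A, B) c).1 (stepL p (A, B) c).2 := by
  obtain ⟨h0, hAB, hB, hA2, hB2⟩ := hG
  have hc3 : (c : ℤ) + 3 ≤ p := by exact_mod_cast hc.2
  have hce : Even (c : ℤ) := even_int_of_colorOdd hc
  refine ⟨le_max_left _ _, ?_, min_le_left _ _, ?_, ?_⟩
  · simp only [stepL, max_le_iff, le_min_iff]
    omega
  · exact even_max (Even.zero) (even_max (hA2.sub hce) (hce.sub hB2))
  · refine even_min (even_p3 hodd) (even_min (hB2.add hce) ?_)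
    have : Even (2 * (p : ℤ) - 4) := ⟨(p : ℤ) - 2, by ring⟩
    exact (this.sub hA2).sub hce

/-- The fusion step lemma: the colors admissible with `c` and some color in `[A,B]` are
exactly the colors in the stepped interval. -/
lemma fusion {p : ℕ} (hp : 5 ≤ p) (hodd : Odd p) {A B : ℤ} (hG : Good p A B)
    {c : ℕ} (hc : ColorOdd p c) (j : ℕ) :
    (ColorOdd p j ∧ ∃ e : ℕ, ColorOdd p e ∧ A ≤ (e : ℤ) ∧ (e : ℤ) ≤ B ∧ AdmOdd p e c j) ↔
    (ColorOdd p j ∧ (stepL p (A, B) c).1 ≤ (j : ℤ) ∧ (j : ℤ) ≤ (stepL p (A, B) c).2) := by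
  obtain ⟨h0, hAB, hB, hA2, hB2⟩ := hG
  have hc3 : (c : ℤ) + 3 ≤ p := by exact_mod_cast hc.2
  have hce : Even (c : ℤ) := even_int_of_colorOdd hc
  simp only [stepL, max_le_iff, le_min_iff, le_max_iff, min_le_iff]
  constructor
  · rintro ⟨hj, e, he, heA, heB, h1, h2, h3, h4⟩
    have hj3 : j + 3 ≤ p := hj.2
    refine ⟨hj, ?_, ?_, ?_, ?_⟩ <;> omega
  · rintro ⟨hj, hlow, hup1, hup2, hup3⟩
    have hje : Even (j : ℤ) := even_int_of_colorOdd hj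
    have hj3 : (j : ℤ) + 3 ≤ p := by exact_mod_cast hj.2
    set E : ℤ := max A (max ((j : ℤ) - c) ((c : ℤ) - j)) with hE
    have hE0 : 0 ≤ E := le_trans h0 (le_max_left _ _)
    have hEeven : Even E := even_max hA2 (even_max (hje.sub hce) (hce.sub hje))
    have hEub : E ≤ B ∧ E ≤ (j : ℤ) + c ∧ E ≤ 2 * (p : ℤ) - 4 - c - j := by
      simp only [hE, max_le_iff]; omega
    have hElb : A ≤ E ∧ (j : ℤ) - c ≤ E ∧ (c : ℤ) - j ≤ E := by
      simp only [hE]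
      exact ⟨le_max_left _ _, le_trans (le_max_left _ _) (le_max_right _ _),
        le_trans (le_max_right _ _) (le_max_right _ _)⟩
    have hcast : ((E.toNat : ℤ)) = E := Int.toNat_of_nonneg hE0
    refine ⟨hj, E.toNat, ⟨?_, ?_⟩, ?_, ?_, ?_, ?_, ?_, ?_⟩
    · rw [← Int.even_coe_nat, hcast]; exact hEeven
    · omega
    · omega
    · omega
    · omega
    · omega
    · omega
    · omega


end Stmt1Aux
namespace Stmt1Aux

def foldPair (p : ℕ) : List ℕ → ℤ × ℤ
  | [] => (0, 0)
  | x :: rest => rest.foldl (stepL p) ((x : ℤ), (x : ℤ))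

lemma foldPair_concat {p : ℕ} {l : List ℕ} (hl : l ≠ []) (c : ℕ) :
    foldPair p (l ++ [c]) = stepL p (foldPair p l) c := by
  cases l with
  | nil => exact absurd rfl hl
  | cons x rest => simp [foldPair, List.foldl_concat]

lemma good_foldPair {p : ℕ} (hp : 5 ≤ p) (hodd : Odd p) :
    ∀ l : List ℕ, l ≠ [] → (∀ x ∈ l, ColorOdd p x) →
      Good p (foldPair p l).1 (foldPair p l).2 := by
  intro l
  induction l using List.reverseRecOn with
  | nil => intro h; exact absurd rfl h
  | append_singleton l c ih =>
    intro _ hcol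
    have hc : ColorOdd p c := hcol c (by simp)
    cases l with
    | nil =>
      have hc3 : (c : ℤ) ≤ (p : ℤ) - 3 := by have := hc.2; omega
      have hfp : foldPair p ([] ++ [c]) = ((c : ℤ), (c : ℤ)) := by simp [foldPair]
      rw [hfp]
      exact ⟨by omega, le_refl _, hc3, even_int_of_colorOdd hc, even_int_of_colorOdd hc⟩
    | cons x rest =>
      rw [foldPair_concat (by simp)]
      have hG := ih (by simp) (fun y hy => hcol y (List.mem_append_left _ hy))
      have := good_step hp hodd hG hc
      simpa using this

lemma reach {p : ℕ} (hp : 5 ≤ p) (hodd : Odd p) :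
    ∀ l : List ℕ, 2 ≤ l.length → (∀ x ∈ l, ColorOdd p x) → ∀ j : ℕ,
      ((ColorOdd p j ∧ HasChain (AdmOdd p) (ColorOdd p) (l ++ [j])) ↔
        (ColorOdd p j ∧ (foldPair p l).1 ≤ (j : ℤ) ∧ (j : ℤ) ≤ (foldPair p l).2)) := by
  intro l
  induction l using List.reverseRecOn with
  | nil => intro h; simp at h
  | append_singleton l c ih =>
    intro hlen hcol j
    have hc : ColorOdd p c := hcol c (by simp)
    rcases l with _ | ⟨x, _ | ⟨y, rest⟩⟩
    · simp at hlen
    · -- l = [x]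
      have hx : ColorOdd p x := hcol x (by simp)
      have hGood : Good p ((x : ℤ)) ((x : ℤ)) := by
        have hx3 : (x : ℤ) ≤ (p : ℤ) - 3 := by have := hx.2; omega
        exact ⟨by omega, le_refl _, hx3, even_int_of_colorOdd hx, even_int_of_colorOdd hx⟩
      have hfold : foldPair p ([x] ++ [c]) = stepL p ((x : ℤ), (x : ℤ)) c := by
        simp [foldPair]
      rw [hfold]
      rw [← fusion hp hodd hGood hc j]
      have hHC : HasChain (AdmOdd p) (ColorOdd p) ([x] ++ [c] ++ [j]) ↔ AdmOdd p x c j := by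
        have heq : [x] ++ [c] ++ [j] = x :: [c, j] := rfl
        rw [heq, hasChain_cons, chainFrom_pair]
      rw [hHC]
      constructor
      · rintro ⟨hj, hadm⟩
        exact ⟨hj, x, hx, le_refl _, le_refl _, hadm⟩
      · rintro ⟨hj, e, he, h1, h2, hadm⟩
        have : e = x := by omega
        subst this
        exact ⟨hj, hadm⟩
    · -- l = x :: y :: rest
      set l' := x :: y :: rest with hl'
      have hG := good_foldPair hp hodd l' (by simp [hl'])
        (fun z hz => hcol z (List.mem_append_left _ hz))
      rw [foldPair_concat (by simp [hl'])]
      have key : HasChain (AdmOdd p) (ColorOdd p) (l' ++ [c] ++ [j]) ↔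
          ∃ e, ColorOdd p e ∧ HasChain (AdmOdd p) (ColorOdd p) (l' ++ [e]) ∧ AdmOdd p e c j := by
        have : l' ++ [c] ++ [j] = x :: ((y :: rest) ++ [c, j]) := by simp [hl']
        rw [this, hasChain_cons, chain_append (y :: rest) (by simp) x c j]
        apply exists_congr; intro e
        constructor
        · rintro ⟨he, hch, hadm⟩
          refine ⟨he, ?_, hadm⟩
          have : l' ++ [e] = x :: ((y :: rest) ++ [e]) := by simp [hl']
          rw [this, hasChain_cons]; exact hch
        · rintro ⟨he, hch, hadm⟩
          refine ⟨he, ?_, hadm⟩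
          have : l' ++ [e] = x :: ((y :: rest) ++ [e]) := by simp [hl']
          rw [this, hasChain_cons] at hch; exact hch
      rw [← fusion hp hodd hG hc j]
      constructor
      · rintro ⟨hj, hhc⟩
        obtain ⟨e, he, hch, hadm⟩ := key.mp hhc
        have := (ih (by simp [hl']) (fun z hz => hcol z (List.mem_append_left _ hz)) e).mp ⟨he, hch⟩
        exact ⟨hj, e, he, this.2.1, this.2.2, hadm⟩
      · rintro ⟨hj, e, he, h1, h2, hadm⟩
        have := (ih (by simp [hl']) (fun z hz => hcol z (List.mem_append_left _ hz)) e).mpr ⟨he, h1, h2⟩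
        exact ⟨hj, key.mpr ⟨e, he, this.2, hadm⟩⟩

end Stmt1Aux
namespace Stmt1Aux

open Finset

def SI (l : List ℕ) (k : ℕ) : ℤ := ((l.take k).sum : ℤ)
def DI (l : List ℕ) (k : ℕ) : ℤ := ((l.drop k).sum : ℤ)

def FF (p : ℕ) (l : List ℕ) (t : ℕ) : ℤ :=
  SI l (l.length - 2 * t) - DI l (l.length - 2 * t) + 2 * (t : ℤ) * ((p : ℤ) - 2)

def GG (p : ℕ) (l : List ℕ) (k : ℕ) : ℤ :=
  DI l (l.length - (2 * k + 1)) - SI l (l.length - (2 * k + 1)) - 2 * (k : ℤ) * ((p : ℤ) - 2)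

def Jmax2 (p : ℕ) (l : List ℕ) : ℤ :=
  min ((p : ℤ) - 3) ((range (l.length / 2 + 1)).inf'
    (Finset.nonempty_range_iff.mpr (Nat.succ_ne_zero _)) (FF p l))

def Jmin2 (p : ℕ) (l : List ℕ) : ℤ :=
  max 0 ((range ((l.length - 1) / 2 + 1)).sup'
    (Finset.nonempty_range_iff.mpr (Nat.succ_ne_zero _)) (GG p l))

lemma SI_add_DI (l : List ℕ) (k : ℕ) : SI l k + DI l k = ((l.sum : ℤ)) := by
  unfold SI DI
  rw [← Nat.cast_add, ← List.sum_append, List.take_append_drop]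

lemma SI_concat {l : List ℕ} {c k : ℕ} (h : k ≤ l.length) : SI (l ++ [c]) k = SI l k := by
  unfold SI; rw [List.take_append_of_le_length h]

lemma DI_concat {l : List ℕ} {c k : ℕ} (h : k ≤ l.length) :
    DI (l ++ [c]) k = DI l k + c := by
  unfold DI; rw [List.drop_append_of_le_length h]; simp

lemma SI_succ {l : List ℕ} {k : ℕ} (h : k < l.length) :
    SI l (k + 1) = SI l k + l[k] := by
  unfold SI; rw [List.sum_take_succ l k h]; push_cast; ring

lemma DI_succ {l : List ℕ} {k : ℕ} (h : k < l.length) :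
    DI l k = DI l (k + 1) + l[k] := by
  have h1 := SI_add_DI l k
  have h2 := SI_add_DI l (k + 1)
  have h3 := SI_succ h
  omega

-- R1
lemma FF_concat_zero (p : ℕ) (l : List ℕ) (c : ℕ) :
    FF p (l ++ [c]) 0 = FF p l 0 + c := by
  unfold FF
  simp only [List.length_append, List.length_singleton, Nat.mul_zero, Nat.sub_zero,
    Nat.cast_zero]
  unfold SI DI
  simp [List.take_of_length_le, List.drop_of_length_le]

-- R2
lemma FF_concat_succ (p : ℕ) (l : List ℕ) (c k : ℕ) :
    FF p (l ++ [c]) (k + 1) = 2 * (p : ℤ) - 4 - c - GG p l k := by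
  unfold FF GG
  have hidx : (l ++ [c]).length - 2 * (k + 1) = l.length - (2 * k + 1) := by
    simp only [List.length_append, List.length_singleton]; omega
  rw [hidx, SI_concat (by omega), DI_concat (by omega)]
  push_cast; ring

-- R3
lemma GG_concat (p : ℕ) (l : List ℕ) (c k : ℕ) :
    GG p (l ++ [c]) k = c - FF p l k := by
  unfold FF GG
  have hidx : (l ++ [c]).length - (2 * k + 1) = l.length - 2 * k := by
    simp only [List.length_append, List.length_singleton]; omega
  rw [hidx, SI_concat (by omega), DI_concat (by omega)]
  push_cast; ring

-- key sum identity
lemma FF_add_GG (p : ℕ) (l : List ℕ) (k : ℕ) (h : 2 * (k + 1) ≤ l.length) :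
    FF p l (k + 1) + GG p l k
      = 2 * (p : ℤ) - 4 - 2 * l[l.length - 2 * (k + 1)]'(by omega) := by
  have h2 : l.length - 2 * (k + 1) < l.length := by omega
  unfold FF GG
  rw [show l.length - (2 * k + 1) = (l.length - 2 * (k + 1)) + 1 from by omega,
    SI_succ h2, DI_succ h2]
  push_cast; ring

lemma FF_add_GG' (p : ℕ) (l : List ℕ) (k : ℕ) (h : 2 * k + 1 ≤ l.length) :
    FF p l k + GG p l k = 2 * l[l.length - (2 * k + 1)]'(by omega) := by
  have h2 : l.length - (2 * k + 1) < l.length := by omega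
  unfold FF GG
  rw [show l.length - 2 * k = (l.length - (2 * k + 1)) + 1 from by omega,
    SI_succ h2, DI_succ h2]
  push_cast; ring

end Stmt1Aux
namespace Stmt1Aux

open Finset

lemma le_Jmax2 {p : ℕ} {l : List ℕ} {x : ℤ} (h1 : x ≤ (p : ℤ) - 3)
    (h2 : ∀ t ∈ range (l.length / 2 + 1), x ≤ FF p l t) : x ≤ Jmax2 p l :=
  le_min h1 (Finset.le_inf' _ _ h2)

lemma Jmax2_le_FF {p : ℕ} {l : List ℕ} {t : ℕ} (ht : t ∈ range (l.length / 2 + 1)) :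
    Jmax2 p l ≤ FF p l t :=
  (min_le_right _ _).trans (Finset.inf'_le _ ht)

lemma Jmax2_le_p3 {p : ℕ} {l : List ℕ} : Jmax2 p l ≤ (p : ℤ) - 3 := min_le_left _ _

lemma GG_le_Jmin2 {p : ℕ} {l : List ℕ} {k : ℕ} (hk : k ∈ range ((l.length - 1) / 2 + 1)) :
    GG p l k ≤ Jmin2 p l :=
  (Finset.le_sup' _ hk).trans (le_max_right _ _)

lemma Jmin2_nonneg {p : ℕ} {l : List ℕ} : 0 ≤ Jmin2 p l := le_max_left _ _

lemma Jmin2_le {p : ℕ} {l : List ℕ} {x : ℤ} (h1 : 0 ≤ x)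
    (h2 : ∀ k ∈ range ((l.length - 1) / 2 + 1), GG p l k ≤ x) : Jmin2 p l ≤ x :=
  max_le h1 (Finset.sup'_le _ _ h2)

lemma Jmax2_cases (p : ℕ) (l : List ℕ) :
    Jmax2 p l = (p : ℤ) - 3 ∨ ∃ t ∈ range (l.length / 2 + 1), Jmax2 p l = FF p l t := by
  unfold Jmax2
  rcases min_choice ((p : ℤ) - 3) ((range (l.length / 2 + 1)).inf'
      (Finset.nonempty_range_iff.mpr (Nat.succ_ne_zero _)) (FF p l)) with h | h
  · exact Or.inl h
  · obtain ⟨t, ht, he⟩ := Finset.exists_mem_eq_inf'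
      (Finset.nonempty_range_iff.mpr (Nat.succ_ne_zero _)) (FF p l)
    exact Or.inr ⟨t, ht, h.trans he⟩

lemma Jmax2_concat {p : ℕ} (hp : 5 ≤ p) {l : List ℕ} (hl : l ≠ []) {c : ℕ}
    (hc : ColorOdd p c) (hall : ∀ y ∈ l, y ≤ c) :
    Jmax2 p (l ++ [c])
      = min ((p : ℤ) - 3) (min (Jmax2 p l + (c : ℤ)) (2 * (p : ℤ) - 4 - Jmin2 p l - (c : ℤ))) := by
  have hm : 1 ≤ l.length := List.length_pos_iff.mpr hl
  have hc3 : (c : ℤ) + 3 ≤ p := by exact_mod_cast hc.2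
  have hc0 : (0 : ℤ) ≤ c := by omega
  apply le_antisymm
  · refine le_min Jmax2_le_p3 (le_min ?_ ?_)
    · have h2 : ∀ t ∈ range (l.length / 2 + 1), Jmax2 p (l ++ [c]) - c ≤ FF p l t := by
        intro t ht
        have ht' : t ≤ l.length / 2 := by
          have := mem_range.mp ht; omega
        rcases Nat.eq_zero_or_pos t with rfl | htpos
        · have h := Jmax2_le_FF (p := p) (l := l ++ [c]) (t := 0)
            (mem_range.mpr (by omega))
          rw [FF_concat_zero] at h; omega
        · obtain ⟨k, rfl⟩ : ∃ k, t = k + 1 := ⟨t - 1, by omega⟩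
          have hle := Jmax2_le_FF (p := p) (l := l ++ [c]) (t := k + 1)
            (mem_range.mpr (by simp only [List.length_append, List.length_singleton]; omega))
          rw [FF_concat_succ] at hle
          have hsum := FF_add_GG p l k (by omega)
          have hx : (l[l.length - 2 * (k + 1)]'(by omega) : ℤ) ≤ (c : ℤ) := by
            exact_mod_cast hall _ (List.getElem_mem _)
          omega
      have := le_Jmax2 (p := p) (l := l) (x := Jmax2 p (l ++ [c]) - c)
        (by have := Jmax2_le_p3 (p := p) (l := l ++ [c]); omega) h2
      omega
    · have key : Jmin2 p l ≤ 2 * (p : ℤ) - 4 - c - Jmax2 p (l ++ [c]) := by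
        refine Jmin2_le ?_ ?_
        · have h1 := Jmax2_le_p3 (p := p) (l := l ++ [c]); omega
        · intro k hk
          have hk' : k ≤ (l.length - 1) / 2 := by have := mem_range.mp hk; omega
          have hle := Jmax2_le_FF (p := p) (l := l ++ [c]) (t := k + 1)
            (mem_range.mpr (by simp only [List.length_append, List.length_singleton]; omega))
          rw [FF_concat_succ] at hle
          omega
      omega
  · refine le_Jmax2 (min_le_left _ _) ?_
    intro t ht
    have ht' : t ≤ (l.length + 1) / 2 := by
      have := mem_range.mp ht
      simp only [List.length_append, List.length_singleton] at this; omega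
    rcases Nat.eq_zero_or_pos t with rfl | htpos
    · rw [FF_concat_zero]
      have h0 : Jmax2 p l ≤ FF p l 0 := Jmax2_le_FF (mem_range.mpr (by omega))
      have h1 : min ((p : ℤ) - 3) (min (Jmax2 p l + (c : ℤ))
            (2 * (p : ℤ) - 4 - Jmin2 p l - (c : ℤ))) ≤ Jmax2 p l + c :=
        (min_le_right _ _).trans (min_le_left _ _)
      omega
    · obtain ⟨k, rfl⟩ : ∃ k, t = k + 1 := ⟨t - 1, by omega⟩
      rw [FF_concat_succ]
      have hG : GG p l k ≤ Jmin2 p l := GG_le_Jmin2 (mem_range.mpr (by omega))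
      have h1 : min ((p : ℤ) - 3) (min (Jmax2 p l + (c : ℤ))
            (2 * (p : ℤ) - 4 - Jmin2 p l - (c : ℤ)))
          ≤ 2 * (p : ℤ) - 4 - Jmin2 p l - c :=
        (min_le_right _ _).trans (min_le_right _ _)
      omega

lemma Jmin2_concat {p : ℕ} (hp : 5 ≤ p) {l : List ℕ} (hl : l ≠ []) {c : ℕ}
    (hc : ColorOdd p c) (hall : ∀ y ∈ l, y ≤ c) :
    Jmin2 p (l ++ [c])
      = max 0 (max (Jmin2 p l - (c : ℤ)) ((c : ℤ) - Jmax2 p l)) := by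
  have hm : 1 ≤ l.length := List.length_pos_iff.mpr hl
  have hc3 : (c : ℤ) + 3 ≤ p := by exact_mod_cast hc.2
  have hc0 : (0 : ℤ) ≤ c := by omega
  apply le_antisymm
  · refine Jmin2_le (le_max_left _ _) ?_
    intro k hk
    have hk' : k ≤ l.length / 2 := by
      have := mem_range.mp hk
      simp only [List.length_append, List.length_singleton] at this; omega
    rw [GG_concat]
    have hF : Jmax2 p l ≤ FF p l k := Jmax2_le_FF (mem_range.mpr (by omega))
    have h1 : (c : ℤ) - Jmax2 p l ≤ max 0 (max (Jmin2 p l - (c : ℤ)) ((c : ℤ) - Jmax2 p l)) :=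
      (le_max_right _ _).trans (le_max_right _ _)
    omega
  · refine max_le Jmin2_nonneg (max_le ?_ ?_)
    · have h0 : (0 : ℤ) ≤ Jmin2 p (l ++ [c]) := Jmin2_nonneg
      have hstep : ∀ k ∈ range ((l.length - 1) / 2 + 1),
          GG p l k ≤ Jmin2 p (l ++ [c]) + c := by
        intro k hk
        have hk' : k ≤ (l.length - 1) / 2 := by have := mem_range.mp hk; omega
        have hle := GG_le_Jmin2 (p := p) (l := l ++ [c]) (k := k)
          (mem_range.mpr (by simp only [List.length_append, List.length_singleton]; omega))
        rw [GG_concat] at hle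
        have hsum := FF_add_GG' p l k (by omega)
        have hx : (l[l.length - (2 * k + 1)]'(by omega) : ℤ) ≤ (c : ℤ) := by
          exact_mod_cast hall _ (List.getElem_mem _)
        omega
      have := Jmin2_le (p := p) (l := l) (x := Jmin2 p (l ++ [c]) + c) (by omega) hstep
      omega
    · rcases Jmax2_cases p l with h | ⟨t, ht, hEq⟩
      · rw [h]
        have := Jmin2_nonneg (p := p) (l := l ++ [c]); omega
      · rw [hEq]
        have ht' : t ≤ l.length / 2 := by have := mem_range.mp ht; omega
        have hle := GG_le_Jmin2 (p := p) (l := l ++ [c]) (k := t)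
          (mem_range.mpr (by simp only [List.length_append, List.length_singleton]; omega))
        rw [GG_concat] at hle
        omega

lemma Jmax2_single {p : ℕ} (hp : 5 ≤ p) {c : ℕ} (hc : ColorOdd p c) :
    Jmax2 p [c] = (c : ℤ) := by
  have hc3 : (c : ℤ) + 3 ≤ p := by exact_mod_cast hc.2
  have h : FF p [c] 0 = (c : ℤ) := by simp [FF, SI, DI]
  unfold Jmax2
  simp only [List.length_singleton]
  norm_num [Finset.range_one, h]
  omega

lemma Jmin2_single {p : ℕ} (hp : 5 ≤ p) {c : ℕ} (hc : ColorOdd p c) :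
    Jmin2 p [c] = (c : ℤ) := by
  have h : GG p [c] 0 = (c : ℤ) := by simp [GG, SI, DI]
  unfold Jmin2
  simp only [List.length_singleton]
  norm_num [Finset.range_one, h]

lemma fold_eq {p : ℕ} (hp : 5 ≤ p) :
    ∀ l : List ℕ, l ≠ [] → (∀ y ∈ l, ColorOdd p y) → List.Pairwise (· ≤ ·) l →
      foldPair p l = (Jmin2 p l, Jmax2 p l) := by
  intro l
  induction l using List.reverseRecOn with
  | nil => intro h; exact absurd rfl h
  | append_singleton l c ih =>
    intro _ hcol hpw
    have hc : ColorOdd p c := hcol c (by simp)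
    cases l with
    | nil =>
      simp only [List.nil_append]
      have h1 : foldPair p [c] = ((c : ℤ), (c : ℤ)) := by simp [foldPair]
      rw [h1, Jmin2_single hp hc, Jmax2_single hp hc]
    | cons x rest =>
      rw [foldPair_concat (by simp)]
      have hsplit := List.pairwise_append.mp hpw
      have hall : ∀ y ∈ x :: rest, y ≤ c := fun y hy => hsplit.2.2 y hy c (by simp)
      have hcol' : ∀ y ∈ x :: rest, ColorOdd p y :=
        fun y hy => hcol y (List.mem_append_left _ hy)
      rw [ih (by simp) hcol' hsplit.1]
      have h1 := Jmin2_concat hp (l := x :: rest) (by simp) hc hall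
      have h2 := Jmax2_concat hp (l := x :: rest) (by simp) hc hall
      rw [h1, h2]
      rfl

end Stmt1Aux
namespace Stmt1Aux

open Finset

lemma inf'_min_const {s : Finset ℕ} (hs : s.Nonempty) (a : ℤ) (f : ℕ → ℤ) :
    s.inf' hs (fun x => min a (f x)) = min a (s.inf' hs f) := by
  apply le_antisymm
  · refine le_min ?_ ?_
    · obtain ⟨x, hx⟩ := hs
      exact (Finset.inf'_le _ hx).trans (min_le_left _ _)
    · exact Finset.le_inf' _ _ fun b hb => (Finset.inf'_le _ hb).trans (min_le_right _ _)
  · exact Finset.le_inf' _ _ fun b hb => min_le_min (le_refl a) (Finset.inf'_le _ hb)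

lemma sup'_max_const {s : Finset ℕ} (hs : s.Nonempty) (a : ℤ) (f : ℕ → ℤ) :
    s.sup' hs (fun x => max a (f x)) = max a (s.sup' hs f) := by
  apply le_antisymm
  · exact Finset.sup'_le _ _ fun b hb => max_le_max (le_refl a) (Finset.le_sup' _ hb)
  · refine max_le ?_ ?_
    · obtain ⟨x, hx⟩ := hs
      exact le_trans (le_max_left a (f x)) (Finset.le_sup' (fun y => max a (f y)) hx)
    · exact Finset.sup'_le _ _ fun b hb =>
        le_trans (le_max_right a (f b)) (Finset.le_sup' (fun y => max a (f y)) hb)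

lemma sum_filter_lt (n : ℕ) (i : Fin n → ℕ) (K : ℕ) :
    (∑ t ∈ Finset.univ.filter (fun t : Fin n => (t : ℕ) < K), (i t : ℤ))
      = SI (List.ofFn i) K := by
  induction K with
  | zero => simp [SI]
  | succ K ih =>
    by_cases hK : K < n
    · have hfil : Finset.univ.filter (fun t : Fin n => (t : ℕ) < K + 1)
          = insert ⟨K, hK⟩ (Finset.univ.filter (fun t : Fin n => (t : ℕ) < K)) := by
        ext t
        simp only [Finset.mem_filter, Finset.mem_univ, true_and, Finset.mem_insert, Fin.ext_iff]
        omega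
      have hnot : (⟨K, hK⟩ : Fin n) ∉ Finset.univ.filter (fun t : Fin n => (t : ℕ) < K) := by
        simp
      rw [hfil, Finset.sum_insert hnot, ih]
      have hlen : K < (List.ofFn i).length := by simpa using hK
      rw [SI_succ hlen]
      simp [List.getElem_ofFn]
      ring
    · have hfil : Finset.univ.filter (fun t : Fin n => (t : ℕ) < K + 1)
          = Finset.univ.filter (fun t : Fin n => (t : ℕ) < K) := by
        ext t
        simp only [Finset.mem_filter, Finset.mem_univ, true_and]
        have := t.isLt; omega
      rw [hfil, ih]
      unfold SI
      rw [List.take_of_length_le (by simpa using by omega : (List.ofFn i).length ≤ K),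
        List.take_of_length_le (by simpa using by omega : (List.ofFn i).length ≤ K + 1)]
  
lemma sum_filter_ge (n : ℕ) (i : Fin n → ℕ) (K : ℕ) :
    (∑ s ∈ Finset.univ.filter (fun s : Fin n => K ≤ (s : ℕ)), (i s : ℤ))
      = DI (List.ofFn i) K := by
  have hsplit := Finset.sum_filter_add_sum_filter_not Finset.univ
    (fun t : Fin n => (t : ℕ) < K) (fun t => (i t : ℤ))
  have hcond : Finset.univ.filter (fun s : Fin n => ¬ (s : ℕ) < K)
      = Finset.univ.filter (fun s : Fin n => K ≤ (s : ℕ)) := by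
    ext t; simp [not_lt]
  rw [hcond] at hsplit
  have htot : (∑ t : Fin n, (i t : ℤ)) = SI (List.ofFn i) K + DI (List.ofFn i) K := by
    rw [SI_add_DI, List.sum_ofFn]
    push_cast
    rfl
  have hlt := sum_filter_lt n i K
  omega

lemma JmaxOdd_eq (p n : ℕ) (i : Fin n → ℕ) : JmaxOdd p n i = Jmax2 p (List.ofFn i) := by
  unfold JmaxOdd Jmax2
  rw [← inf'_min_const]
  apply Finset.inf'_congr
  · simp
  · intro t ht
    rw [sum_filter_lt, sum_filter_ge]
    unfold FF
    congr 2 <;> simp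

lemma JminOdd_eq (p n : ℕ) (i : Fin n → ℕ) : JminOdd p n i = Jmin2 p (List.ofFn i) := by
  unfold JminOdd Jmin2
  rw [← sup'_max_const]
  apply Finset.sup'_congr
  · simp
  · intro t ht
    rw [sum_filter_lt, sum_filter_ge]
    unfold GG
    congr 2 <;> simp

lemma count {p : ℕ} (hp : 5 ≤ p) {A B : ℤ} (hG : Good p A B) :
    {j : ℕ | ColorOdd p j ∧ A ≤ (j : ℤ) ∧ (j : ℤ) ≤ B}.ncard = (B - A).toNat / 2 + 1 := by
  classical
  obtain ⟨h0, hAB, hB, hA2, hB2⟩ := hG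
  have ha : ((A.toNat : ℤ)) = A := Int.toNat_of_nonneg h0
  have hb : ((B.toNat : ℤ)) = B := Int.toNat_of_nonneg (h0.trans hAB)
  have ha2 : A.toNat % 2 = 0 := by rw [Int.even_iff] at hA2; omega
  have hb2 : B.toNat % 2 = 0 := by rw [Int.even_iff] at hB2; omega
  have hseteq : {j : ℕ | ColorOdd p j ∧ A ≤ (j : ℤ) ∧ (j : ℤ) ≤ B}
      = ↑((Finset.range ((B.toNat - A.toNat) / 2 + 1)).image (fun t => A.toNat + 2 * t)) := by
    ext j
    simp only [Set.mem_setOf_eq, Finset.coe_image, Set.mem_image, Finset.mem_coe,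
      Finset.mem_range, ColorOdd, Nat.even_iff]
    constructor
    · rintro ⟨⟨hje, hj3⟩, h1, h2⟩
      exact ⟨(j - A.toNat) / 2, by omega, by omega⟩
    · rintro ⟨t, ht, rfl⟩
      refine ⟨⟨by omega, by omega⟩, by omega, by omega⟩
  rw [hseteq, Set.ncard_coe_finset,
    Finset.card_image_of_injective _ (fun s t hst => by omega), Finset.card_range]
  omega

end Stmt1Aux
/-- for odd `p ≥ 5`, `n ≥ 2` and nondecreasing colors `i_1 ≤ ⋯ ≤ i_n` in `C_p`,
`δ_p(i_1,…,i_n) = 1 + (J_max - J_min)/2`; in particular `δ_p(i_1,…,i_n) ≥ 1`. -/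
theorem stmt1 (p : ℕ) (hp : 5 ≤ p) (hodd : Odd p) (n : ℕ) (hn : 2 ≤ n)
    (i : Fin n → ℕ) (hi : ∀ s, ColorOdd p (i s)) (hmono : Monotone i) :
    (deltaOdd p (List.ofFn i) : ℤ)
        = 1 + (JmaxOdd p n i - JminOdd p n i) / 2 ∧
      1 ≤ deltaOdd p (List.ofFn i) := by
  classical
  open Stmt1Aux in
  have hlen : (List.ofFn i).length = n := by simp
  have hlen2 : 2 ≤ (List.ofFn i).length := by omega
  have hne : List.ofFn i ≠ [] := by
    intro h; rw [h] at hlen; simp at hlen; omega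
  have hcol : ∀ x ∈ List.ofFn i, ColorOdd p x := by
    intro x hx
    rw [List.mem_ofFn] at hx
    obtain ⟨s, hs⟩ := hx
    rw [← hs]; exact hi s
  have hpw : List.Pairwise (· ≤ ·) (List.ofFn i) :=
    List.pairwise_ofFn.mpr (fun a b hab => hmono hab.le)
  have hfold := fold_eq hp (List.ofFn i) hne hcol hpw
  have hG : Good p (Jmin2 p (List.ofFn i)) (Jmax2 p (List.ofFn i)) := by
    have := good_foldPair hp hodd (List.ofFn i) hne hcol
    rw [hfold] at this
    exact this
  have hset : {j : ℕ | ColorOdd p j ∧ HasChain (AdmOdd p) (ColorOdd p) (List.ofFn i ++ [j])}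
      = {j : ℕ | ColorOdd p j ∧ Jmin2 p (List.ofFn i) ≤ (j : ℤ)
          ∧ (j : ℤ) ≤ Jmax2 p (List.ofFn i)} := by
    ext j
    have := reach hp hodd (List.ofFn i) hlen2 hcol j
    rw [hfold] at this
    exact this
  have hdelta : deltaOdd p (List.ofFn i)
      = (Jmax2 p (List.ofFn i) - Jmin2 p (List.ofFn i)).toNat / 2 + 1 := by
    rw [deltaOdd, hset]
    exact count hp hG
  have hJ1 : JmaxOdd p n i = Jmax2 p (List.ofFn i) := JmaxOdd_eq p n i
  have hJ2 : JminOdd p n i = Jmin2 p (List.ofFn i) := JminOdd_eq p n i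
  obtain ⟨h0, hAB, hB, hA2, hB2⟩ := hG
  rw [Int.even_iff] at hA2 hB2
  constructor
  · rw [hdelta, hJ1, hJ2]
    omega
  · rw [hdelta]
    omega
end

section
/- Let p ≥ 5 be an odd integer, n ≥ 1, and let i_1,…,i_n ∈ C_p be colors, not all equal to 0. Then there exists j ∈ C_p such that (i_1,…,i_n,j,j) has a chain coloring; that is, δ^{(1)}_p(i_1,…,i_n) ≥ 1, where δ^{(1)}_p(i_1,…,i_n) is the number of j ∈ C_p such that (i_1,…,i_n,j,j) has a chain coloring. -/
lemma chainAux (p : ℕ) (hp : 5 ≤ p) (l : List ℕ) (hl : ∀ x ∈ l, ColorOdd p x) :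
    ∀ a, ColorOdd p a →
      ∃ j, ColorOdd p j ∧ ∃ e, ChainFrom (AdmOdd p) (ColorOdd p) a (l ++ [j, j]) e := by
  induction l with
  | nil =>
    intro a ha
    have ha1 : a % 2 = 0 := Nat.even_iff.mp ha.1
    have ha2 := ha.2
    refine ⟨if a % 4 = 0 then a / 2 else a / 2 + 1, ⟨?_, ?_⟩, [], ?_⟩
    · rw [Nat.even_iff]; split <;> omega
    · split <;> omega
    · show AdmOdd p a _ _
      refine ⟨?_, ?_, ?_, ?_⟩ <;> split <;> omega
  | cons x l ih =>
    intro a ha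
    have hx : ColorOdd p x := hl x (by simp)
    set e1 := max a x - min a x with he1
    have ha1 : a % 2 = 0 := Nat.even_iff.mp ha.1
    have hx1 : x % 2 = 0 := Nat.even_iff.mp hx.1
    have ha2 := ha.2
    have hx2 := hx.2
    have he1c : ColorOdd p e1 := ⟨by rw [Nat.even_iff]; omega, by omega⟩
    obtain ⟨j, hj, es, hes⟩ := ih (fun y hy => hl y (by simp [hy])) e1 he1c
    refine ⟨j, hj, e1 :: es, ?_⟩
    obtain ⟨r, rs, hr⟩ := List.exists_cons_of_ne_nil (show l ++ [j, j] ≠ [] by simp)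
    show ChainFrom (AdmOdd p) (ColorOdd p) a (x :: (l ++ [j, j])) (e1 :: es)
    rw [hr] at hes ⊢
    rw [ChainFrom]
    exact ⟨he1c, ⟨by omega, by omega, by omega, by omega⟩, hes⟩

/-- for odd `p ≥ 5`, `n ≥ 1` and colors `i_1, …, i_n ∈ C_p` not all zero,
there exists `j ∈ C_p` such that `(i_1, …, i_n, j, j)` has a chain coloring,
i.e. `δ^{(1)}_p(i_1,…,i_n) ≥ 1`. -/
theorem stmt3 (p : ℕ) (hp : 5 ≤ p) (hodd : Odd p) (n : ℕ) (hn : 1 ≤ n)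
    (i : Fin n → ℕ) (hi : ∀ s, ColorOdd p (i s)) (hne : ∃ s, i s ≠ 0) :
    ∃ j : ℕ, ColorOdd p j ∧
      HasChain (AdmOdd p) (ColorOdd p) (List.ofFn i ++ [j, j]) := by
  obtain ⟨m, rfl⟩ : ∃ m, n = m + 1 := ⟨n - 1, by omega⟩
  rw [List.ofFn_succ]
  obtain ⟨j, hj, e, he⟩ := chainAux p hp (List.ofFn fun s => i s.succ)
    (by intro x hx; simp only [List.mem_ofFn] at hx; obtain ⟨s, rfl⟩ := hx; exact hi _)
    (i 0) (hi 0)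
  exact ⟨j, hj, e, he⟩
end

section
/- Let p ≥ 6 be an even integer, m ≥ 3, and let i_1,…,i_m ∈ C_p be colors, not all equal to 0. Then a chain coloring for (i_1,…,i_m) exists if and only if both: (1) i_1+⋯+i_m is even, and (2) for every integer k with 0 ≤ 2k+1 ≤ m and every subset {s_1,…,s_{2k+1}} ⊆ {1,…,m} of cardinality 2k+1 one has 2·(i_{s_1}+⋯+i_{s_{2k+1}}) ≤ k(p−4) + (i_1+⋯+i_m). -/
/-- Level-`p` colors for even `p`: natural numbers `j` with `j ≤ (p - 4)/2`. -/
def ColorEven (p j : ℕ) : Prop := 2 * j + 4 ≤ p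

/-- `p`-admissibility of a triple of colors for even `p`:
`|b - c| ≤ a ≤ b + c`, `a + b + c` even, and `a + b + c ≤ p - 4`. -/
def AdmEven (p a b c : ℕ) : Prop :=
  b ≤ a + c ∧ c ≤ a + b ∧ a ≤ b + c ∧ Even (a + b + c) ∧ a + b + c + 4 ≤ p

/-!
Induction on `m`, replacing the first two colors `a, b` by the first internal color `e`
(with `q = p - 4`). Necessity: if `(a, b, e)` is admissible and the conditions hold for
`(e, i₃, …)`, they hold for `(a, b, i₃, …)`, by distinguishing which of `a, b` lie in the
odd subset. Sufficiency: the conditions on `(a, b, i₃, …)` only force lower bounds on `e`,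
namely `|a - b|` and `2 ∑ t - k q - ∑ R` for odd subsets `t` of the remaining colors `R`;
the largest of them is admissible with `a, b` and keeps the conditions for `(e, i₃, …)`.
-/

namespace Multiset

variable {α β : Type*}

theorem le_cons_cases {a : α} {s t : Multiset α} (h : t ≤ a ::ₘ s) :
    t ≤ s ∨ ∃ u ≤ s, t = a ::ₘ u := by
  classical
  by_cases ha : a ∈ t
  · exact .inr ⟨t.erase a, erase_le_iff_le_cons.2 h, (cons_erase ha).symm⟩
  · exact .inl ((le_cons_of_notMem ha).1 h)

theorem exists_le_map_eq_of_le_map {f : α → β} {s : Multiset α} {t : Multiset β}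
    (h : t ≤ s.map f) : ∃ u ≤ s, u.map f = t := by
  induction s using Quot.inductionOn with | h l =>
  induction t using Quot.inductionOn with | h l₁ =>
  obtain ⟨w, hw, hwl⟩ := coe_le.1 h
  obtain ⟨l', hl', rfl⟩ := List.sublist_map_iff.1 hwl
  exact ⟨l', coe_le.2 hl'.subperm, Quot.sound hw⟩

theorem sum_add_sum_le_of_le [DecidableEq α] [AddCommMonoid α] [PartialOrder α]
    [CanonicallyOrderedAdd α] [IsOrderedAddMonoid α] {s t R : Multiset α} (hs : s ≤ R)
    (ht : t ≤ R) : s.sum + t.sum ≤ R.sum + (s ∩ t).sum := by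
  obtain ⟨u, hu⟩ := le_iff_exists_add.1 (union_le hs ht)
  rw [← sum_add, ← union_add_inter, sum_add, hu, sum_add]
  gcongr
  exact le_self_add

theorem two_mul_sum_le_card_mul {q : ℕ} {t : Multiset ℕ} (ht : ∀ x ∈ t, 2 * x ≤ q) :
    2 * t.sum ≤ card t * q :=
  calc 2 * t.sum = (t.map (2 * ·)).sum := by rw [sum_map_mul_left, map_id']
    _ ≤ card (t.map (2 * ·)) • q := sum_le_card_nsmul _ _ (by simpa using ht)
    _ = card t * q := by simp

end Multiset

open Multiset

theorem hasChain_triple_iff {adm : ℕ → ℕ → ℕ → Prop} {C : ℕ → Prop} {a b c : ℕ} :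
    HasChain adm C [a, b, c] ↔ adm a b c := by
  refine ⟨fun ⟨e, he⟩ => ?_, fun h => ⟨[], h⟩⟩
  match e, he with
  | [], h => exact h
  | [_], h => exact (h.2.2 : False).elim
  | _ :: _ :: _, h => exact (h.2.2.2.2 : False).elim

theorem hasChain_cons_cons_iff {adm : ℕ → ℕ → ℕ → Prop} {C : ℕ → Prop} {a b c d : ℕ}
    {rest : List ℕ} :
    HasChain adm C (a :: b :: c :: d :: rest) ↔
      ∃ e, C e ∧ adm a b e ∧ HasChain adm C (e :: c :: d :: rest) := by
  constructor
  · rintro ⟨_ | ⟨e, es⟩, h⟩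
    · exact h.elim
    · exact ⟨e, h.1, h.2.1, es, h.2.2⟩
  · rintro ⟨e, hCe, hadm, es, h⟩
    exact ⟨e :: es, hCe, hadm, h⟩

theorem colorEven_add_four_iff {q x : ℕ} : ColorEven (q + 4) x ↔ 2 * x ≤ q := by
  unfold ColorEven; omega

/-- Conditions (1) and (2) of the theorem for the multiset of colors `I`, with `q = p - 4`. -/
def ChainCondition (q : ℕ) (I : Multiset ℕ) : Prop :=
  Even I.sum ∧ ∀ t ≤ I, ∀ k, card t = 2 * k + 1 → 2 * t.sum ≤ k * q + I.sum

theorem ChainCondition.of_admissible {q a b e : ℕ} {R : Multiset ℕ}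
    (hadm : AdmEven (q + 4) a b e) (hC : ChainCondition q (e ::ₘ R)) :
    ChainCondition q (a ::ₘ b ::ₘ R) := by
  obtain ⟨hbe, hea, hab, habe, hq⟩ := hadm
  obtain ⟨hev, hle⟩ := hC
  simp only [ChainCondition, sum_cons, Nat.even_iff] at hev habe hle ⊢
  refine ⟨by omega, fun t ht k hk => ?_⟩
  rcases le_cons_cases ht with hbR | ⟨t, hbR, rfl⟩
  · rcases le_cons_cases hbR with hR | ⟨t, hR, rfl⟩
    · linarith [hle t (hR.trans (le_cons_self R e)) k hk]
    · have := hle (e ::ₘ t) (cons_le_cons e hR) k (by simpa using hk)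
      simp only [sum_cons] at this ⊢
      omega
  · rcases le_cons_cases hbR with hR | ⟨t, hR, rfl⟩
    · have := hle (e ::ₘ t) (cons_le_cons e hR) k (by simpa using hk)
      simp only [sum_cons] at this ⊢
      omega
    · obtain ⟨k, rfl⟩ : ∃ k', k = k' + 1 := ⟨k - 1, by simp only [card_cons] at hk; omega⟩
      have := hle t (hR.trans (le_cons_self R e)) k (by simp only [card_cons] at hk; omega)
      simp only [sum_cons] at this ⊢
      nlinarith

theorem chainCondition_pair_self (q c : ℕ) : ChainCondition q {c, c} := by
  refine ⟨by simp, fun t ht k hk => ?_⟩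
  obtain rfl : k = 0 := by
    have := card_le_card ht
    simp only [insert_eq_cons, card_cons, card_singleton] at this
    omega
  obtain ⟨x, rfl⟩ := card_eq_one.1 hk
  have hx : x = c := by simpa using mem_of_le ht (mem_singleton_self x)
  simp [hx, two_mul]

theorem chainCondition_triple_iff {q a b c : ℕ} :
    ChainCondition q {a, b, c} ↔ AdmEven (q + 4) a b c := by
  refine ⟨fun ⟨hev, hle⟩ => ?_, fun h => .of_admissible h (chainCondition_pair_self q c)⟩
  have ha := hle {a} (by simp) 0 rfl
  have hb := hle {b} (by simp) 0 rfl
  have hc := hle {c} (by simp) 0 rfl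
  have habc := hle {a, b, c} le_rfl 1 rfl
  simp only [insert_eq_cons, sum_cons, sum_singleton, Nat.even_iff] at hev ha hb hc habc
  exact ⟨by omega, by omega, by omega, Nat.even_iff.2 (by omega), by omega⟩

/-- The lower bounds `|a - b|` and `2 ∑ t - k q - ∑ R` (for `t ≤ R` of size `2k+1`) that the
triangle inequality and `ChainCondition q (e ::ₘ R)` impose on an internal color `e`
replacing the pair `a, b`. -/
def IsForcedLowerBound (q a b : ℕ) (R : Multiset ℕ) (v : ℕ) : Prop :=
  v + a = b ∨ v + b = a ∨ ∃ t ≤ R, ∃ k, card t = 2 * k + 1 ∧ 2 * t.sum = v + k * q + R.sum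

namespace IsForcedLowerBound

variable {q a b v : ℕ} {R : Multiset ℕ}

theorem le_add (hC : ChainCondition q (a ::ₘ b ::ₘ R)) (hv : IsForcedLowerBound q a b R v) :
    v ≤ a + b := by
  rcases hv with hv | hv | ⟨t, ht, k, hk, hv⟩
  · omega
  · omega
  · have := hC.2 t ((ht.trans (le_cons_self _ b)).trans (le_cons_self _ a)) k hk
    simp only [sum_cons] at this
    omega

theorem add_add_le (hC : ChainCondition q (a ::ₘ b ::ₘ R)) (ha : 2 * a ≤ q) (hb : 2 * b ≤ q)
    (hv : IsForcedLowerBound q a b R v) : a + b + v ≤ q := by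
  rcases hv with hv | hv | ⟨t, ht, k, hk, hv⟩
  · omega
  · omega
  · have := hC.2 (a ::ₘ b ::ₘ t) (cons_le_cons _ (cons_le_cons _ ht)) (k + 1)
      (by simp [hk]; ring)
    simp only [sum_cons, add_one_mul] at this
    omega

theorem even_add_add (hC : ChainCondition q (a ::ₘ b ::ₘ R)) (hq : Even q)
    (hv : IsForcedLowerBound q a b R v) : Even (a + b + v) := by
  have hev := hC.1
  simp only [sum_cons, Nat.even_iff] at hev ⊢
  rcases hv with hv | hv | ⟨t, ht, k, hk, hv⟩
  · omega
  · omega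
  · have := Nat.even_iff.1 (hq.mul_left k)
    omega

theorem add_two_mul_sum_le (hC : ChainCondition q (a ::ₘ b ::ₘ R)) (hR : ∀ x ∈ R, 2 * x ≤ q)
    (hv : IsForcedLowerBound q a b R v) {t₀ : Multiset ℕ} (ht₀ : t₀ ≤ R) {k : ℕ}
    (hk : card t₀ = 2 * k) : v + 2 * t₀.sum ≤ k * q + R.sum := by
  rcases hv with hv | hv | ⟨t, ht, k', hk', hv⟩
  · have := hC.2 (b ::ₘ t₀) ((cons_le_cons b ht₀).trans (le_cons_self _ a)) k (by simp [hk])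
    simp only [sum_cons] at this
    omega
  · have := hC.2 (a ::ₘ t₀) (cons_le_cons a (ht₀.trans (le_cons_self _ b))) k (by simp [hk])
    simp only [sum_cons] at this
    omega
  · -- an odd `t` and an even `t₀` share at most `k + k'` elements, each at most `q / 2`
    have hcard : card (t ∩ t₀) ≤ k + k' := by
      have := card_le_card (inter_le_left (s := t) (t := t₀))
      have := card_le_card (inter_le_right (s := t) (t := t₀))
      omega
    have := two_mul_sum_le_card_mul (t := t ∩ t₀) fun x hx =>
      hR x (mem_of_le (inter_le_left.trans ht) hx)
    have := Nat.mul_le_mul_right q hcard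
    have := sum_add_sum_le_of_le ht ht₀
    rw [add_mul] at *
    omega

end IsForcedLowerBound

theorem ChainCondition.exists_admissible {q a b : ℕ} {R : Multiset ℕ} (hq : Even q)
    (ha : 2 * a ≤ q) (hb : 2 * b ≤ q) (hR : ∀ x ∈ R, 2 * x ≤ q)
    (hC : ChainCondition q (a ::ₘ b ::ₘ R)) :
    ∃ e, 2 * e ≤ q ∧ AdmEven (q + 4) a b e ∧ ChainCondition q (e ::ₘ R) := by
  classical
  set e := Nat.findGreatest (IsForcedLowerBound q a b R) (a + b)
  have hmax (v) (hv : IsForcedLowerBound q a b R v) : v ≤ e :=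
    Nat.le_findGreatest (hv.le_add hC) hv
  have he : IsForcedLowerBound q a b R e := by
    rcases le_total a b with h | h
    · exact Nat.findGreatest_spec (m := b - a) (by omega) (.inl (by omega))
    · exact Nat.findGreatest_spec (m := a - b) (by omega) (.inr (.inl (by omega)))
  have hba : b ≤ a + e := by
    rcases le_total a b with h | h
    · have := hmax (b - a) (.inl (by omega)); omega
    · omega
  have hab : a ≤ b + e := by
    rcases le_total a b with h | h
    · omega
    · have := hmax (a - b) (.inr (.inl (by omega))); omega
  have hle := he.le_add hC
  have hsum := he.add_add_le hC ha hb
  have hpar := he.even_add_add hC hq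
  refine ⟨e, by omega, ⟨hba, by omega, hab, hpar, by omega⟩, ?_, ?_⟩
  · have hev := hC.1
    simp only [sum_cons, Nat.even_iff] at hev hpar ⊢
    omega
  · intro t ht k hk
    rw [sum_cons]
    rcases le_cons_cases ht with ht | ⟨t₀, ht₀, rfl⟩
    · by_contra! hlt
      have := hmax (2 * t.sum - (k * q + R.sum)) (.inr (.inr ⟨t, ht, k, hk, by omega⟩))
      omega
    · have := he.add_two_mul_sum_le hC hR ht₀ (k := k) (by simpa using hk)
      rw [sum_cons]
      omega

theorem hasChain_iff_chainCondition {q : ℕ} (hq : Even q) :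
    ∀ l : List ℕ, 3 ≤ l.length → (∀ x ∈ l, 2 * x ≤ q) →
      (HasChain (AdmEven (q + 4)) (ColorEven (q + 4)) l ↔ ChainCondition q l)
  | [], h, _ | [_], h, _ | [_, _], h, _ => by simp at h
  | [a, b, c], _, _ => hasChain_triple_iff.trans chainCondition_triple_iff.symm
  | a :: b :: c :: d :: rest, _, hl => by
    have hR : ∀ x ∈ (c :: d :: rest : Multiset ℕ), 2 * x ≤ q := fun x hx =>
      hl x (by simp_all)
    have ih (e : ℕ) (he : 2 * e ≤ q) :=
      hasChain_iff_chainCondition hq (e :: c :: d :: rest) (by simp)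
        (by simpa [he] using hR)
    rw [hasChain_cons_cons_iff]
    constructor
    · rintro ⟨e, he, hadm, hchain⟩
      exact .of_admissible (R := (c :: d :: rest : Multiset ℕ)) hadm
        ((ih e (colorEven_add_four_iff.1 he)).1 hchain)
    · intro hC
      obtain ⟨e, he, hadm, hC'⟩ :=
        ChainCondition.exists_admissible (R := (c :: d :: rest : Multiset ℕ)) hq
          (hl a (by simp)) (hl b (by simp)) hR hC
      exact ⟨e, colorEven_add_four_iff.2 he, hadm, (ih e he).2 hC'⟩
termination_by l => l.length

theorem chainCondition_map_univ_iff {ι : Type*} [Fintype ι] {q : ℕ} {f : ι → ℕ} :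
    ChainCondition q (Finset.univ.val.map f) ↔
      Even (∑ t, f t) ∧ ∀ k (S : Finset ι), S.card = 2 * k + 1 →
        2 * ∑ s ∈ S, f s ≤ k * q + ∑ t, f t := by
  refine and_congr Iff.rfl ⟨fun h k S hS => ?_, fun h t ht k hk => ?_⟩
  · exact h _ (map_le_map (Finset.val_le_iff.2 S.subset_univ)) k (by simpa using hS)
  · obtain ⟨u, hu, rfl⟩ := exists_le_map_eq_of_le_map ht
    exact h k ⟨u, nodup_of_le hu Finset.univ.nodup⟩ (by simpa using hk)

theorem stmt4_general (p : ℕ) (hp : 6 ≤ p) (heven : Even p) (m : ℕ) (hm : 3 ≤ m)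
    (i : Fin m → ℕ) (hi : ∀ s, ColorEven p (i s)) :
    HasChain (AdmEven p) (ColorEven p) (List.ofFn i) ↔
      (Even (∑ t, i t) ∧
        ∀ (k : ℕ) (S : Finset (Fin m)), 2 * k + 1 ≤ m → S.card = 2 * k + 1 →
          2 * ∑ s ∈ S, (i s : ℤ) ≤ (k : ℤ) * ((p : ℤ) - 4) + ∑ t, (i t : ℤ)) := by
  obtain ⟨q, rfl⟩ : ∃ q, p = q + 4 := ⟨p - 4, by omega⟩
  have hq : Even q := (Nat.even_add.1 heven).2 ⟨2, rfl⟩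
  rw [hasChain_iff_chainCondition hq _ (by simpa)
      (by simpa [List.mem_ofFn, colorEven_add_four_iff] using hi),
    ← Fin.univ_val_map, chainCondition_map_univ_iff]
  have hp4 : ((q + 4 : ℕ) : ℤ) - 4 = q := by push_cast; ring
  rw [hp4]
  refine and_congr Iff.rfl ⟨fun h k S _ hS => ?_, fun h k S hS => ?_⟩
  · exact_mod_cast h k S hS
  · exact_mod_cast h k S (by simpa [hS] using S.card_le_univ) hS

/-- for even `p ≥ 6`, `m ≥ 3` and colors `i_1, …, i_m ∈ C_p` not all zero,
a chain coloring for `(i_1, …, i_m)` exists iff `∑_t i_t` is even and for every `k` with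
`2k+1 ≤ m` and every subset `S ⊆ {1, …, m}` of cardinality `2k+1` one has
`2 ∑_{s ∈ S} i_s ≤ k(p-4) + ∑_t i_t`. -/
theorem stmt4 (p : ℕ) (hp : 6 ≤ p) (heven : Even p) (m : ℕ) (hm : 3 ≤ m)
    (i : Fin m → ℕ) (hi : ∀ s, ColorEven p (i s)) (hne : ∃ s, i s ≠ 0) :
    HasChain (AdmEven p) (ColorEven p) (List.ofFn i) ↔
      (Even (∑ t, i t) ∧
        ∀ (k : ℕ) (S : Finset (Fin m)), 2 * k + 1 ≤ m → S.card = 2 * k + 1 →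
          2 * ∑ s ∈ S, (i s : ℤ) ≤ (k : ℤ) * ((p : ℤ) - 4) + ∑ t, (i t : ℤ)) :=
  stmt4_general p hp heven m hm i hi
end

section
/- Let p ≥ 6 be an even integer and let i, j ∈ C_p. Then the number of pairs (a,b) ∈ C_p × C_p such that both triples (i,a,b) and (j,a,b) are p-admissible equals ((p−2)/2 − max(i,j))·(1 + min(i,j)) if i ≡ j (mod 2), and equals 0 if i ≢ j (mod 2). In particular this number is 0 if and only if i ≢ j (mod 2). -/
lemma stmt7_key (p q : ℕ) (hpq : p = q + q) (i j : ℕ)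
    (hi : 2 * i + 4 ≤ p) (hj : 2 * j + 4 ≤ p) (hij : i ≤ j) (hpar : i % 2 = j % 2) :
    {r : ℕ × ℕ | ColorEven p r.1 ∧ ColorEven p r.2 ∧
        AdmEven p i r.1 r.2 ∧ AdmEven p j r.1 r.2}.ncard = (i + 1) * (q - 1 - j) := by
  classical
  set F : ℕ × ℕ → ℕ × ℕ := fun kt => ((j - i) / 2 + kt.2 + kt.1, (j + i) / 2 + kt.2 - kt.1)
    with hF
  have hset : {r : ℕ × ℕ | ColorEven p r.1 ∧ ColorEven p r.2 ∧
      AdmEven p i r.1 r.2 ∧ AdmEven p j r.1 r.2}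
      = ↑((Finset.range (i + 1) ×ˢ Finset.range (q - 1 - j)).image F) := by
    ext ⟨a, b⟩
    simp only [Set.mem_setOf_eq, Finset.coe_image, Set.mem_image, Finset.mem_coe,
      Finset.mem_product, Finset.mem_range, AdmEven, ColorEven, Nat.even_iff, hF,
      Prod.exists, Prod.mk.injEq]
    constructor
    · rintro ⟨h1, h2, ⟨h3, h4, h5, h6, h7⟩, ⟨g3, g4, g5, g6, g7⟩⟩
      exact ⟨(a + i - b) / 2, (a + b - j) / 2, ⟨by omega, by omega⟩, by omega, by omega⟩
    · rintro ⟨k, t, ⟨hk, ht⟩, ha, hb⟩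
      refine ⟨by omega, by omega, ⟨by omega, by omega, by omega, by omega, by omega⟩,
        ⟨by omega, by omega, by omega, by omega, by omega⟩⟩
  rw [hset, Set.ncard_coe_finset]
  rw [Finset.card_image_of_injOn, Finset.card_product, Finset.card_range, Finset.card_range]
  rintro ⟨k, t⟩ hkt ⟨k', t'⟩ hkt' heq
  simp only [Finset.coe_product, Set.mem_prod, Finset.mem_coe, Finset.mem_range] at hkt hkt'
  simp only [hF, Prod.mk.injEq] at heq
  have : k = k' ∧ t = t' := by omega
  simp [this.1, this.2]

/-- for even `p ≥ 6` and `i, j ∈ C_p`, the number of pairs `(a,b) ∈ C_p × C_p`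
with both `(i,a,b)` and `(j,a,b)` `p`-admissible is `((p-2)/2 - max i j) (1 + min i j)` if
`i ≡ j (mod 2)` and `0` otherwise; in particular it vanishes iff `i ≢ j (mod 2)`. -/
theorem stmt7 (p : ℕ) (hp : 6 ≤ p) (heven : Even p) (i j : ℕ)
    (hi : ColorEven p i) (hj : ColorEven p j) :
    (({q : ℕ × ℕ | ColorEven p q.1 ∧ ColorEven p q.2 ∧
        AdmEven p i q.1 q.2 ∧ AdmEven p j q.1 q.2}.ncard : ℤ)
      = if i % 2 = j % 2 then
          (((p : ℤ) - 2) / 2 - (max i j : ℤ)) * (1 + (min i j : ℤ))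
        else 0) ∧
    ({q : ℕ × ℕ | ColorEven p q.1 ∧ ColorEven p q.2 ∧
        AdmEven p i q.1 q.2 ∧ AdmEven p j q.1 q.2}.ncard = 0 ↔ ¬ i % 2 = j % 2) := by
  obtain ⟨q, hq⟩ := heven
  by_cases hpar : i % 2 = j % 2
  · have hcard : {r : ℕ × ℕ | ColorEven p r.1 ∧ ColorEven p r.2 ∧
        AdmEven p i r.1 r.2 ∧ AdmEven p j r.1 r.2}.ncard
        = (min i j + 1) * (q - 1 - max i j) := by
      rcases le_total i j with hij | hij
      · rw [min_eq_left hij, max_eq_right hij]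
        exact stmt7_key p q hq i j hi hj hij hpar
      · have hsymm : {r : ℕ × ℕ | ColorEven p r.1 ∧ ColorEven p r.2 ∧
            AdmEven p i r.1 r.2 ∧ AdmEven p j r.1 r.2}
            = {r : ℕ × ℕ | ColorEven p r.1 ∧ ColorEven p r.2 ∧
            AdmEven p j r.1 r.2 ∧ AdmEven p i r.1 r.2} := by
          ext r; simp only [Set.mem_setOf_eq]; tauto
        rw [min_eq_right hij, max_eq_left hij, hsymm]
        exact stmt7_key p q hq j i hj hi hij hpar.symm
    have hMq : max i j + 2 ≤ q := by
      rcases le_total i j with h | h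
      · simp only [max_eq_right h]; unfold ColorEven at hj; omega
      · simp only [max_eq_left h]; unfold ColorEven at hi; omega
    constructor
    · rw [hcard, if_pos hpar]
      have hpq2 : ((p : ℤ) - 2) / 2 = (q : ℤ) - 1 := by omega
      push_cast [Nat.sub_sub, Nat.cast_sub (by omega : 1 + max i j ≤ q)]
      rw [hpq2]
      ring
    · rw [hcard]
      constructor
      · intro h0
        exfalso
        have : min i j + 1 ≥ 1 := by omega
        have : q - 1 - max i j ≥ 1 := by omega
        nlinarith [h0]
      · intro h; exact absurd hpar h
  · have hempty : {r : ℕ × ℕ | ColorEven p r.1 ∧ ColorEven p r.2 ∧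
        AdmEven p i r.1 r.2 ∧ AdmEven p j r.1 r.2} = ∅ := by
      ext ⟨a, b⟩
      simp only [Set.mem_setOf_eq, Set.mem_empty_iff_false, iff_false, AdmEven, Nat.even_iff]
      rintro ⟨-, -, ⟨-, -, -, h6, -⟩, ⟨-, -, -, g6, -⟩⟩
      omega
    rw [hempty]
    simp [hpar]
end

section
/- Let p ≥ 5 be an odd integer and let i, j ∈ C_p. Then the number of pairs (a,b) ∈ C_p × C_p such that both triples (i,a,b) and (j,a,b) are p-admissible equals (p−1−max(i,j))·(min(i,j)+1)/2. In particular this number is never 0. -/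
lemma key (k m n : ℕ) (hk : 2 ≤ k) (hmn : m ≤ n) (hn : n + 1 ≤ k) :
    {q : ℕ × ℕ | ColorOdd (2*k+1) q.1 ∧ ColorOdd (2*k+1) q.2 ∧
      AdmOdd (2*k+1) (2*m) q.1 q.2 ∧ AdmOdd (2*k+1) (2*n) q.1 q.2}.ncard
    = (2*m+1)*(k-n) := by
  classical
  set f : ℕ × ℕ → ℕ × ℕ := fun dt =>
    (n + (n + dt.1 + m) % 2 + 2 * dt.2 + dt.1 - m,
     n + (n + dt.1 + m) % 2 + 2 * dt.2 + m - dt.1) with hf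
  have hset : {q : ℕ × ℕ | ColorOdd (2*k+1) q.1 ∧ ColorOdd (2*k+1) q.2 ∧
      AdmOdd (2*k+1) (2*m) q.1 q.2 ∧ AdmOdd (2*k+1) (2*n) q.1 q.2}
      = ↑(((Finset.range (2*m+1)) ×ˢ (Finset.range (k-n))).image f) := by
    ext ⟨a, b⟩
    simp only [Set.mem_setOf_eq, Finset.coe_image, Set.mem_image, Finset.mem_coe,
      Finset.mem_product, Finset.mem_range, hf, ColorOdd, AdmOdd, Nat.even_iff,
      Prod.ext_iff, Prod.exists]
    constructor
    · rintro ⟨⟨ha2, ha3⟩, ⟨hb2, hb3⟩, hadm1, hadm2⟩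
      refine ⟨(a + 2*m - b)/2, ((a+b)/2 - n - ((a+b)/2 + n) % 2)/2, ⟨?_, ?_⟩, ?_, ?_⟩ <;> omega
    · rintro ⟨d, t, ⟨hd, ht⟩, hab1, hab2⟩
      refine ⟨⟨?_, ?_⟩, ⟨?_, ?_⟩, ⟨?_, ?_, ?_, ?_⟩, ⟨?_, ?_, ?_, ?_⟩⟩ <;> omega
  rw [hset, Set.ncard_coe_finset, Finset.card_image_of_injOn, Finset.card_product,
    Finset.card_range, Finset.card_range]
  rintro ⟨d, t⟩ hmem ⟨d', t'⟩ hmem' heq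
  simp only [Finset.mem_coe, Finset.mem_product, Finset.mem_range, hf, Prod.ext_iff] at hmem hmem' heq
  obtain ⟨h1, h2⟩ := heq
  have : d = d' ∧ t = t' := by omega
  exact Prod.ext this.1 this.2

/-- for odd `p ≥ 5` and `i, j ∈ C_p`, the number of pairs `(a,b) ∈ C_p × C_p`
with both `(i,a,b)` and `(j,a,b)` `p`-admissible equals
`(p - 1 - max i j)(min i j + 1)/2`; in particular it is never `0`. -/
theorem stmt8 (p : ℕ) (hp : 5 ≤ p) (hodd : Odd p) (i j : ℕ)
    (hi : ColorOdd p i) (hj : ColorOdd p j) :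
    (({q : ℕ × ℕ | ColorOdd p q.1 ∧ ColorOdd p q.2 ∧
        AdmOdd p i q.1 q.2 ∧ AdmOdd p j q.1 q.2}.ncard : ℤ)
      = ((p : ℤ) - 1 - (max i j : ℤ)) * ((min i j : ℤ) + 1) / 2) ∧
    {q : ℕ × ℕ | ColorOdd p q.1 ∧ ColorOdd p q.2 ∧
        AdmOdd p i q.1 q.2 ∧ AdmOdd p j q.1 q.2}.ncard ≠ 0 := by
  obtain ⟨k, hk⟩ := hodd
  obtain ⟨⟨mi, hmi⟩, hi3⟩ := hi
  obtain ⟨⟨mj, hmj⟩, hj3⟩ := hj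
  have hi' : i = 2 * mi := by omega
  have hj' : j = 2 * mj := by omega
  subst hk hi' hj'
  have hcard : {q : ℕ × ℕ | ColorOdd (2*k+1) q.1 ∧ ColorOdd (2*k+1) q.2 ∧
        AdmOdd (2*k+1) (2*mi) q.1 q.2 ∧ AdmOdd (2*k+1) (2*mj) q.1 q.2}.ncard
      = (2 * (min mi mj) + 1) * (k - max mi mj) := by
    rcases le_total mi mj with h | h
    · rw [min_eq_left h, max_eq_right h]
      have hswap : {q : ℕ × ℕ | ColorOdd (2*k+1) q.1 ∧ ColorOdd (2*k+1) q.2 ∧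
          AdmOdd (2*k+1) (2*mi) q.1 q.2 ∧ AdmOdd (2*k+1) (2*mj) q.1 q.2}
          = {q : ℕ × ℕ | ColorOdd (2*k+1) q.1 ∧ ColorOdd (2*k+1) q.2 ∧
          AdmOdd (2*k+1) (2*mi) q.1 q.2 ∧ AdmOdd (2*k+1) (2*mj) q.1 q.2} := rfl
      rw [hswap]
      exact key k mi mj (by omega) h (by omega)
    · rw [min_eq_right h, max_eq_left h]
      have hswap : {q : ℕ × ℕ | ColorOdd (2*k+1) q.1 ∧ ColorOdd (2*k+1) q.2 ∧
          AdmOdd (2*k+1) (2*mi) q.1 q.2 ∧ AdmOdd (2*k+1) (2*mj) q.1 q.2}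
          = {q : ℕ × ℕ | ColorOdd (2*k+1) q.1 ∧ ColorOdd (2*k+1) q.2 ∧
          AdmOdd (2*k+1) (2*mj) q.1 q.2 ∧ AdmOdd (2*k+1) (2*mi) q.1 q.2} := by
        ext q; constructor <;> (rintro ⟨h1, h2, h3, h4⟩; exact ⟨h1, h2, h4, h3⟩)
      rw [hswap]
      exact key k mj mi (by omega) h (by omega)
  rw [hcard]
  have hM : ((2*mi : ℕ) : ℤ) ⊔ ((2*mj : ℕ) : ℤ) = 2 * ((max mi mj : ℕ) : ℤ) := by
    push_cast; omega
  have hm : ((2*mi : ℕ) : ℤ) ⊓ ((2*mj : ℕ) : ℤ) = 2 * ((min mi mj : ℕ) : ℤ) := by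
    push_cast; omega
  have hnk : max mi mj + 1 ≤ k := by omega
  constructor
  · rw [hM, hm]
    have hcast : ((k - max mi mj : ℕ) : ℤ) = (k : ℤ) - ((max mi mj : ℕ) : ℤ) :=
      Nat.cast_sub (by omega)
    push_cast [hcast]
    rw [show (2 * (k:ℤ) + 1 - 1 - 2 * ((mi:ℤ) ⊔ (mj:ℤ))) * (2 * ((mi:ℤ) ⊓ (mj:ℤ)) + 1)
        = 2 * ((2 * ((mi:ℤ) ⊓ (mj:ℤ)) + 1) * ((k:ℤ) - ((mi:ℤ) ⊔ (mj:ℤ)))) from by ring,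
      Int.mul_ediv_cancel_left _ two_ne_zero]
  · have h1 : 1 ≤ k - max mi mj := by omega
    positivity
end

section
/- Let p ≥ 6 be an even integer, c = (p−4)/2, and m ≥ 3. Consider the constant boundary tuple (c,c,…,c) with m entries. Then the number of chain colorings of (c,c,…,c) is 1 if m is even and 0 if m is odd; moreover, when m is even, the unique chain coloring is the alternating one e_1 = 0, e_2 = c, e_3 = 0, …, i.e. e_t = 0 for t odd and e_t = c for t even. -/
lemma chainFrom_cons_cons (adm C a x y l e es) :
    ChainFrom adm C a (x::y::l) (e::es) ↔ (C e ∧ adm a x e ∧ ChainFrom adm C e (y::l) es) := by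
  simp [ChainFrom]

lemma adm_iff (c a e : ℕ) : AdmEven (2*c+4) a c e ↔ a + e = c := by
  unfold AdmEven
  constructor
  · rintro ⟨h1, -, -, -, h5⟩; omega
  · intro h
    refine ⟨by omega, by omega, by omega, ⟨c, by omega⟩, by omega⟩

lemma range_map_step (c k : ℕ) :
    (List.range (k+1)).map (fun t => if t % 2 = 0 then 0 else c)
      = 0 :: (List.range k).map (fun t => if t % 2 = 0 then c else 0) := by
  rw [List.range_succ_eq_map, List.map_cons, List.map_map]
  simp only [if_pos rfl]
  congr 1
  apply List.map_congr_left
  intro t _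
  simp only [Function.comp]
  rcases Nat.mod_two_eq_zero_or_one t with h | h
  · have h1 : (t+1) % 2 = 1 := by omega
    simp [h, h1]
  · have h1 : (t+1) % 2 = 0 := by omega
    simp [h, h1]

lemma range_map_step' (c k : ℕ) :
    (List.range (k+1)).map (fun t => if t % 2 = 0 then c else 0)
      = c :: (List.range k).map (fun t => if t % 2 = 0 then 0 else c) := by
  rw [List.range_succ_eq_map, List.map_cons, List.map_map]
  simp only [if_pos rfl]
  congr 1
  apply List.map_congr_left
  intro t _
  simp only [Function.comp]
  rcases Nat.mod_two_eq_zero_or_one t with h | h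
  · have h1 : (t+1) % 2 = 1 := by omega
    simp [h, h1]
  · have h1 : (t+1) % 2 = 0 := by omega
    simp [h, h1]

lemma key_s9 (c : ℕ) (hc : 1 ≤ c) : ∀ k (e : List ℕ),
    (ChainFrom (AdmEven (2*c+4)) (ColorEven (2*c+4)) c (List.replicate (k+2) c) e ↔
      k % 2 = 1 ∧ e = (List.range k).map (fun t => if t % 2 = 0 then 0 else c)) ∧
    (ChainFrom (AdmEven (2*c+4)) (ColorEven (2*c+4)) 0 (List.replicate (k+2) c) e ↔
      k % 2 = 0 ∧ e = (List.range k).map (fun t => if t % 2 = 0 then c else 0)) := by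
  intro k
  induction k with
  | zero =>
    intro e
    cases e with
    | nil =>
      constructor
      · show AdmEven (2*c+4) c c c ↔ _
        rw [adm_iff]
        simp
        omega
      · show AdmEven (2*c+4) 0 c c ↔ _
        rw [adm_iff]
        simp
    | cons x es =>
      constructor <;>
      · simp only [List.replicate]
        rw [chainFrom_cons_cons]
        simp only [List.range_zero, List.map_nil]
        constructor
        · rintro ⟨-, -, h⟩
          exfalso
          cases es with
          | nil => exact h
          | cons y ys => obtain ⟨-, -, h2⟩ := h; cases ys <;> exact h2
        · rintro ⟨-, h⟩; exact absurd h (by simp)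
  | succ k ih =>
    intro e
    have hrep : List.replicate (k+3) c = c :: List.replicate (k+2) c := rfl
    have hrep2 : List.replicate (k+2) c = c :: List.replicate (k+1) c := rfl
    cases e with
    | nil =>
      rw [hrep, hrep2]
      constructor <;>
      · show False ↔ _
        have : (List.range (k+1)).map (fun t => if t % 2 = 0 then 0 else c) ≠ []
            ∧ (List.range (k+1)).map (fun t => if t % 2 = 0 then c else 0) ≠ [] := by
          constructor <;> simp [List.range_succ_eq_map]
        constructor
        · exact False.elim
        · rintro ⟨-, h⟩
          first
          | exact this.1 h.symm ▸ this.1 (by rw [← h])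
          | exact this.2 (by rw [← h])
          | exact this.1 (by rw [← h])
    | cons x es =>
      rw [hrep, hrep2, chainFrom_cons_cons, ← hrep2]
      constructor
      · -- start from c : forces x = 0
        constructor
        · rintro ⟨hC, hadm, hch⟩
          have hx : x = 0 := by have := (adm_iff c c x).mp hadm; omega
          subst hx
          obtain ⟨hk, hes⟩ := ((ih es).2).mp hch
          refine ⟨by omega, ?_⟩
          rw [range_map_step, hes]
        · rintro ⟨hk, he⟩
          rw [range_map_step] at he
          obtain ⟨hx, hes⟩ := List.cons.injEq .. ▸ he
          subst hx
          refine ⟨by simp [ColorEven], (adm_iff c c 0).mpr (by omega), ?_⟩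
          exact ((ih es).2).mpr ⟨by omega, hes⟩
      · -- start from 0 : forces x = c
        constructor
        · rintro ⟨hC, hadm, hch⟩
          have hx : x = c := by have := (adm_iff c 0 x).mp hadm; omega
          rw [hx] at hch
          obtain ⟨hk, hes⟩ := ((ih es).1).mp hch
          refine ⟨by omega, ?_⟩
          rw [hx, range_map_step', hes]
        · rintro ⟨hk, he⟩
          rw [range_map_step'] at he
          obtain ⟨hx, hes⟩ := List.cons.injEq .. ▸ he
          rw [hx]
          refine ⟨by simp [ColorEven], (adm_iff c 0 c).mpr (by omega), ?_⟩
          exact ((ih es).1).mpr ⟨by omega, hes⟩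

/-- for even `p ≥ 6`, `c = (p-4)/2` and `m ≥ 3`, the number of chain colorings
of the constant boundary tuple `(c, …, c)` (`m` entries) is `1` if `m` is even and `0` if
`m` is odd; moreover, for even `m`, the unique chain coloring is the alternating one
`e_t = 0` for `t` odd and `e_t = c` for `t` even (`t` being the `1`-based position). -/
theorem stmt9 (p : ℕ) (hp : 6 ≤ p) (heven : Even p) (m : ℕ) (hm : 3 ≤ m) :
    ({e : List ℕ |
        IsChainColoring (AdmEven p) (ColorEven p) (List.replicate m ((p - 4) / 2)) e}.ncard
      = if Even m then 1 else 0) ∧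
    (Even m → ∀ e : List ℕ,
      IsChainColoring (AdmEven p) (ColorEven p) (List.replicate m ((p - 4) / 2)) e ↔
        e = (List.range (m - 3)).map (fun t => if t % 2 = 0 then 0 else (p - 4) / 2)) := by
  rw [Nat.even_iff] at heven
  obtain ⟨c, hc, hpc⟩ : ∃ c, 1 ≤ c ∧ p = 2 * c + 4 := ⟨(p - 4) / 2, by omega, by omega⟩
  obtain ⟨k, hk⟩ : ∃ k, m = k + 3 := ⟨m - 3, by omega⟩
  subst hk hpc
  simp only [show (2 * c + 4 - 4) / 2 = c from by omega]
  have hrep : List.replicate (k+3) c = c :: List.replicate (k+2) c := rfl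
  have hmem : ∀ e : List ℕ,
      IsChainColoring (AdmEven (2*c+4)) (ColorEven (2*c+4)) (List.replicate (k+3) c) e ↔
        k % 2 = 1 ∧ e = (List.range k).map (fun t => if t % 2 = 0 then 0 else c) := by
    intro e
    rw [hrep]
    exact (key_s9 c hc k e).1
  have hk3 : k + 3 - 3 = k := by omega
  constructor
  · by_cases hme : Even (k+3)
    · rw [if_pos hme]
      have hk1 : k % 2 = 1 := by rw [Nat.even_iff] at hme; omega
      have : {e : List ℕ | IsChainColoring (AdmEven (2*c+4)) (ColorEven (2*c+4))
          (List.replicate (k+3) c) e}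
          = {(List.range k).map (fun t => if t % 2 = 0 then 0 else c)} := by
        ext e
        simp only [Set.mem_setOf_eq, Set.mem_singleton_iff, hmem e, hk1, true_and]
      rw [this, Set.ncard_singleton]
    · rw [if_neg hme]
      have hk1 : k % 2 = 0 := by rw [Nat.even_iff] at hme; omega
      have : {e : List ℕ | IsChainColoring (AdmEven (2*c+4)) (ColorEven (2*c+4))
          (List.replicate (k+3) c) e} = ∅ := by
        ext e
        simp only [Set.mem_setOf_eq, Set.mem_empty_iff_false, iff_false, hmem e]
        omega
      rw [this, Set.ncard_empty]
  · intro hme e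
    have hk1 : k % 2 = 1 := by rw [Nat.even_iff] at hme; omega
    rw [hmem e, hk3]
    simp [hk1]
end

section
/- Let p ≥ 8 be an even integer, let A ∈ ℂ be a primitive 2p-th root of unity, and let j ∈ ℕ. Then the least positive integer N such that (−A^{2j+3})^N = 1 and (−A^{2j+5})^N = 1 equals 2p. -/
/-- for even `p ≥ 8`, `A ∈ ℂ` a primitive `2p`-th root of unity, and `j ∈ ℕ`,
the least positive integer `N` with `(-A^{2j+3})^N = 1` and `(-A^{2j+5})^N = 1` equals `2p`. -/
theorem stmt12 (p : ℕ) (hp : 8 ≤ p) (heven : Even p) (A : ℂ) (hA : orderOf A = 2 * p)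
    (j : ℕ) :
    IsLeast {N : ℕ | 0 < N ∧ (-A ^ (2 * j + 3)) ^ N = 1 ∧ (-A ^ (2 * j + 5)) ^ N = 1}
      (2 * p) := by
  have hA2p : A ^ (2 * p) = 1 := by rw [← hA]; exact pow_orderOf_eq_one A
  have hApne : A ^ p ≠ 1 := by
    intro h
    have hd := orderOf_dvd_of_pow_eq_one h
    rw [hA] at hd
    have := Nat.le_of_dvd (by omega) hd
    omega
  have hAp : A ^ p = -1 := by
    have hsq : A ^ p * A ^ p = 1 := by
      rw [← pow_add, show p + p = 2 * p by ring, hA2p]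
    rcases mul_self_eq_one_iff.mp hsq with h | h
    · exact absurd h hApne
    · exact h
  constructor
  · refine ⟨by omega, ?_, ?_⟩ <;>
    · rw [(even_two_mul p).neg_pow, ← pow_mul, mul_comm, pow_mul, hA2p, one_pow]
  · rintro N ⟨hN, h1, h2⟩
    have hsplit : (-A ^ (2 * j + 5)) = (-A ^ (2 * j + 3)) * A ^ 2 := by
      rw [show 2 * j + 5 = (2 * j + 3) + 2 by ring, pow_add]; ring
    rw [hsplit, mul_pow, h1, one_mul, ← pow_mul] at h2
    have hd := orderOf_dvd_of_pow_eq_one h2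
    rw [hA] at hd
    have hpd : p ∣ N := (Nat.mul_dvd_mul_iff_left (by norm_num : 0 < 2)).mp hd
    obtain ⟨k, hk⟩ := hpd
    by_contra hlt
    push_neg at hlt
    subst hk
    have hNp : k = 1 := by
      rcases k with _ | _ | k
      · simp at hN
      · rfl
      · exfalso; nlinarith
    subst hNp
    rw [Nat.mul_one] at h1 hN hlt
    rw [heven.neg_pow, ← pow_mul, mul_comm, pow_mul, hAp] at h1
    rw [show 2 * j + 3 = 2 * (j + 1) + 1 by ring, pow_succ, pow_mul] at h1
    norm_num at h1
end

section
/- Let V be a nonzero finite-dimensional complex vector space and let G be a subgroup of GL(V). Assume: (1) G acts irreducibly on V, i.e. the only complex subspaces W ⊆ V with g·W ⊆ W for all g ∈ G are W = 0 and W = V; (2) there is a Hermitian sesquilinear form B : V × V → ℂ (conjugate-linear in the first variable, linear in the second, with conj(B(x,y)) = B(y,x)) that is G-invariant, i.e. B(gx, gy) = B(x,y) for all g ∈ G and x, y ∈ V; (3) B is nondegenerate, i.e. if B(x,y) = 0 for all y ∈ V then x = 0; and (4) B is indefinite, i.e. there exist x, y ∈ V with B(x,x) > 0 and B(y,y) <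 0 (note B(v,v) is real for all v). Then G is infinite. -/
open Module Finset

set_option maxHeartbeats 1600000

/-- Coxeter's lemma: if a subgroup `G` of `GL(V)`, `V` a nonzero
finite-dimensional complex vector space, acts irreducibly on `V` and preserves a
nondegenerate indefinite Hermitian form `B`, then `G` is infinite. -/
theorem stmt15 (V : Type*) [AddCommGroup V] [Module ℂ V]
    [FiniteDimensional ℂ V] [Nontrivial V]
    (G : Subgroup (V →ₗ[ℂ] V)ˣ)
    (hirr : ∀ W : Submodule ℂ V,
      (∀ g ∈ G, ∀ x ∈ W, ((g : (V →ₗ[ℂ] V)ˣ) : V →ₗ[ℂ] V) x ∈ W) → W = ⊥ ∨ W = ⊤)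
    (B : V → V → ℂ)
    (hadd1 : ∀ x x' y, B (x + x') y = B x y + B x' y)
    (hadd2 : ∀ x y y', B x (y + y') = B x y + B x y')
    (hsmul1 : ∀ (c : ℂ) (x y : V), B (c • x) y = starRingEnd ℂ c * B x y)
    (hsmul2 : ∀ (c : ℂ) (x y : V), B x (c • y) = c * B x y)
    (hherm : ∀ x y, starRingEnd ℂ (B x y) = B y x)
    (hinv : ∀ g ∈ G, ∀ x y,
      B (((g : (V →ₗ[ℂ] V)ˣ) : V →ₗ[ℂ] V) x) (((g : (V →ₗ[ℂ] V)ˣ) : V →ₗ[ℂ] V) y) = B x y)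
    (hnd : ∀ x, (∀ y, B x y = 0) → x = 0)
    (hindef : ∃ x y, 0 < (B x x).re ∧ (B y y).re < 0) :
    (G : Set (V →ₗ[ℂ] V)ˣ).Infinite := by
  classical
  by_contra hfin
  rw [Set.not_infinite] at hfin
  haveI : Fintype G := hfin.fintype
  -- basic facts about B
  have hB0 : ∀ y, B 0 y = 0 := by
    intro y
    have := hsmul1 0 0 y
    simpa using this
  -- a basis and an auxiliary positive definite form
  set b : Basis (Fin (finrank ℂ V)) ℂ V := Module.finBasis ℂ V with hb
  set P0 : V → V → ℂ :=
    fun x y => ∑ i, (starRingEnd ℂ) (b.repr x i) * (b.repr y i) with hP0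
  have hP0add1 : ∀ x x' y, P0 (x + x') y = P0 x y + P0 x' y := by
    intro x x' y
    simp [P0, map_add, add_mul, Finset.sum_add_distrib]
  have hP0add2 : ∀ x y y', P0 x (y + y') = P0 x y + P0 x y' := by
    intro x y y'
    simp [P0, map_add, mul_add, Finset.sum_add_distrib]
  have hP0smul1 : ∀ (c : ℂ) x y, P0 (c • x) y = starRingEnd ℂ c * P0 x y := by
    intro c x y
    simp [P0, map_smul, smul_eq_mul, Finset.mul_sum, mul_assoc]
  have key1 : ∀ a : ℂ, ((starRingEnd ℂ) a * a).im = 0 := by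
    intro a
    simp [Complex.mul_im, Complex.conj_re, Complex.conj_im]
    ring
  have key2 : ∀ a : ℂ, ((starRingEnd ℂ) a * a).re = Complex.normSq a := by
    intro a
    simp [Complex.mul_re, Complex.conj_re, Complex.conj_im, Complex.normSq_apply]
  have hP0smul2 : ∀ (c : ℂ) x y, P0 x (c • y) = c * P0 x y := by
    intro c x y
    simp only [P0, map_smul, Finsupp.smul_apply, smul_eq_mul, Finset.mul_sum]
    congr 1; funext i; ring
  have hP0real : ∀ x, (P0 x x).im = 0 := by
    intro x
    simp [P0, Complex.im_sum, key1]
  have hP0nonneg : ∀ x, 0 ≤ (P0 x x).re := by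
    intro x
    simp only [P0, Complex.re_sum, key2]
    exact Finset.sum_nonneg fun i _ => Complex.normSq_nonneg _
  have hP0pos : ∀ x, x ≠ 0 → 0 < (P0 x x).re := by
    intro x hx
    obtain ⟨i, hi⟩ : ∃ i, b.repr x i ≠ 0 := by
      by_contra h
      push_neg at h
      apply hx
      have : b.repr x = 0 := by ext i; simpa using h i
      simpa using congrArg b.repr.symm this
    simp only [P0, Complex.re_sum, key2]
    apply Finset.sum_pos' (fun j _ => Complex.normSq_nonneg _)
    exact ⟨i, Finset.mem_univ i, Complex.normSq_pos.mpr hi⟩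
  -- the group action
  set φ : G → V →ₗ[ℂ] V := fun g => ((g : (V →ₗ[ℂ] V)ˣ) : V →ₗ[ℂ] V) with hφ
  have hφmul : ∀ (g h : G) x, φ (g * h) x = φ g (φ h x) := by
    intro g h x
    simp [φ, Units.val_mul, Module.End.mul_apply]
  have hφone : ∀ x, φ 1 x = x := by intro x; simp [φ]
  have hφinv : ∀ (g : G) x, φ g (φ g⁻¹ x) = x := by
    intro g x
    rw [← hφmul, mul_inv_cancel, hφone]
  -- the averaged positive definite invariant form
  set P : V → V → ℂ := fun x y => ∑ g : G, P0 (φ g x) (φ g y) with hP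
  have hPadd1 : ∀ x x' y, P (x + x') y = P x y + P x' y := by
    intro x x' y
    simp [P, map_add, hP0add1, Finset.sum_add_distrib]
  have hPsmul1 : ∀ (c : ℂ) x y, P (c • x) y = starRingEnd ℂ c * P x y := by
    intro c x y
    simp [P, map_smul, hP0smul1, Finset.mul_sum]
  have hPadd2 : ∀ x y y', P x (y + y') = P x y + P x y' := by
    intro x y y'
    simp [P, map_add, hP0add2, Finset.sum_add_distrib]
  have hPsmul2 : ∀ (c : ℂ) x y, P x (c • y) = c * P x y := by
    intro c x y
    simp [P, map_smul, hP0smul2, Finset.mul_sum]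
  have hPim : ∀ x, (P x x).im = 0 := by
    intro x
    simp [P, Complex.im_sum, hP0real]
  have hPpos : ∀ x, x ≠ 0 → 0 < (P x x).re := by
    intro x hx
    simp only [P, Complex.re_sum]
    apply Finset.sum_pos' (fun g _ => hP0nonneg _)
    exact ⟨1, Finset.mem_univ 1, by rw [hφone]; exact hP0pos x hx⟩
  have hPne : ∀ x, x ≠ 0 → P x x ≠ 0 := by
    intro x hx h
    have := hPpos x hx
    rw [h] at this
    simp at this
  have hPinv : ∀ (g : G) x y, P (φ g x) (φ g y) = P x y := by
    intro g x y
    simp only [P]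
    refine (Fintype.sum_equiv (Equiv.mulRight g)
      (fun h => P0 (φ h (φ g x)) (φ h (φ g y))) (fun h => P0 (φ h x) (φ h y)) ?_).symm.symm
    intro h
    simp [Equiv.coe_mulRight, hφmul]
  -- conjugation operator
  set C : V → V := fun x => b.equivFun.symm fun i => (starRingEnd ℂ) (b.equivFun x i) with hC
  have hCrepr : ∀ x, b.equivFun (C x) = fun i => (starRingEnd ℂ) (b.equivFun x i) := by
    intro x
    exact b.equivFun.apply_symm_apply _
  have hCC : ∀ x, C (C x) = x := by
    intro x
    apply b.equivFun.injective
    simp [hCrepr]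
  have hCadd : ∀ x y, C (x + y) = C x + C y := by
    intro x y
    apply b.equivFun.injective
    funext i
    simp [hCrepr, map_add]
  have hCsmul : ∀ (c : ℂ) x, C (c • x) = starRingEnd ℂ c • C x := by
    intro c x
    apply b.equivFun.injective
    funext i
    simp [hCrepr, map_smul]
  have hC0 : C 0 = 0 := by
    apply b.equivFun.injective
    funext i
    simp [hCrepr]
  -- package P and B as linear maps into the dual
  set Pl : V →ₗ[ℂ] Module.Dual ℂ V := LinearMap.mk₂ ℂ (fun z x => P (C z) x)
    (fun z z' x => by
      show P (C (z + z')) x = P (C z) x + P (C z') x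
      rw [hCadd, hPadd1])
    (fun c z x => by
      show P (C (c • z)) x = c * P (C z) x
      rw [hCsmul, hPsmul1]; simp)
    (fun z x x' => hPadd2 _ _ _)
    (fun c z x => hPsmul2 _ _ _) with hPl
  set Bl : V →ₗ[ℂ] Module.Dual ℂ V := LinearMap.mk₂ ℂ (fun z x => B (C z) x)
    (fun z z' x => by
      show B (C (z + z')) x = B (C z) x + B (C z') x
      rw [hCadd, hadd1])
    (fun c z x => by
      show B (C (c • z)) x = c * B (C z) x
      rw [hCsmul, hsmul1]; simp)
    (fun z x x' => hadd2 _ _ _)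
    (fun c z x => hsmul2 _ _ _) with hBl
  have hPlinj : Function.Injective Pl := by
    intro z z' h
    rw [← sub_eq_zero] at h ⊢
    rw [← map_sub] at h
    set w := z - z'
    by_contra hw
    have hCw : C w ≠ 0 := fun h' => hw (by rw [← hCC w, h', hC0])
    have : P (C w) (C w) = 0 := by
      have := congrFun (congrArg (fun f : Module.Dual ℂ V => (f : V → ℂ)) h) (C w)
      simpa [Pl, LinearMap.mk₂_apply] using this
    exact hPne _ hCw this
  set e : V ≃ₗ[ℂ] Module.Dual ℂ V :=
    Pl.linearEquivOfInjective hPlinj (Subspace.dual_finrank_eq).symm with he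
  set T : V →ₗ[ℂ] V := e.symm.toLinearMap ∘ₗ Bl with hT
  have hTkey : ∀ y x, P (C (T y)) x = B (C y) x := by
    intro y x
    have h1 : Pl (T y) = Bl y := by
      show Pl (e.symm (Bl y) : V) = Bl y
      exact (Pl.linearEquivOfInjective_apply hPlinj
        (Subspace.dual_finrank_eq).symm _).symm.trans (e.apply_symm_apply (Bl y))
    have := congrFun (congrArg (fun f : Module.Dual ℂ V => (f : V → ℂ)) h1) x
    simpa [Pl, Bl, LinearMap.mk₂_apply] using this
  -- the self-adjoint intertwiner S
  set S : Module.End ℂ V :=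
    { toFun := fun y => C (T (C y))
      map_add' := fun y y' => by
        show C (T (C (y + y'))) = C (T (C y)) + C (T (C y'))
        rw [hCadd, map_add, hCadd]
      map_smul' := fun c y => by
        show C (T (C (c • y))) = c • C (T (C y))
        rw [hCsmul, map_smul, hCsmul]
        simp } with hS
  have hSkey : ∀ y x, P (S y) x = B y x := by
    intro y x
    have := hTkey (C y) x
    rw [hCC] at this
    exact this
  -- S commutes with G
  have hcomm : ∀ (g : G) y, φ g (S y) = S (φ g y) := by
    intro g y
    rw [← sub_eq_zero]
    by_contra hw
    apply hPne _ hw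
    have key : ∀ x, P (φ g (S y) - S (φ g y)) x = 0 := by
      intro x
      have e1 : P (φ g (S y)) x = B y (φ g⁻¹ x) := by
        conv_lhs => rw [← hφinv g x]
        rw [hPinv, hSkey]
      have e2 : P (S (φ g y)) x = B y (φ g⁻¹ x) := by
        rw [hSkey]
        conv_lhs => rw [← hφinv g x]
        exact hinv _ g.2 _ _
      have hsub : P (φ g (S y) - S (φ g y)) x
          = P (φ g (S y)) x - P (S (φ g y)) x := by
        have h1 : φ g (S y) - S (φ g y) = φ g (S y) + (-1 : ℂ) • S (φ g y) := by
          simp [sub_eq_add_neg]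
        rw [h1, hPadd1, hPsmul1]
        simp [sub_eq_add_neg]
      rw [hsub, e1, e2, sub_self]
    exact key _
  -- eigenvalue of S
  obtain ⟨μ, hμ⟩ := Module.End.exists_eigenvalue S
  have hWtop : Module.End.eigenspace S μ = ⊤ := by
    have hGinv : ∀ g ∈ G, ∀ x ∈ Module.End.eigenspace S μ,
        ((g : (V →ₗ[ℂ] V)ˣ) : V →ₗ[ℂ] V) x ∈ Module.End.eigenspace S μ := by
      intro g hg x hx
      rw [Module.End.mem_eigenspace_iff] at hx ⊢
      have hg' : ((g : (V →ₗ[ℂ] V)ˣ) : V →ₗ[ℂ] V) = φ ⟨g, hg⟩ := rfl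
      rw [hg', ← hcomm ⟨g, hg⟩ x, hx, map_smul]
    rcases hirr (Module.End.eigenspace S μ) hGinv with h | h
    · exact absurd h hμ
    · exact h
  have hSall : ∀ v : V, S v = μ • v := by
    intro v
    have : v ∈ Module.End.eigenspace S μ := hWtop ▸ Submodule.mem_top
    exact Module.End.mem_eigenspace_iff.mp this
  -- conclude
  have hBP : ∀ y, B y y = starRingEnd ℂ μ * P y y := by
    intro y
    rw [← hSkey, hSall, hPsmul1]
  obtain ⟨x, y, hx, hy⟩ := hindef
  have hx0 : x ≠ 0 := by
    intro h
    rw [h, hB0] at hx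
    simp at hx
  have hy0 : y ≠ 0 := by
    intro h
    rw [h, hB0] at hy
    simp at hy
  have hrex : (B x x).re = μ.re * (P x x).re := by
    rw [hBP, Complex.mul_re, Complex.conj_re, Complex.conj_im, hPim]
    ring
  have hrey : (B y y).re = μ.re * (P y y).re := by
    rw [hBP, Complex.mul_re, Complex.conj_re, Complex.conj_im, hPim]
    ring
  have h1 := hPpos x hx0
  have h2 := hPpos y hy0
  rw [hrex] at hx
  rw [hrey] at hy
  nlinarith
end
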